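/- arXiv:1403.3594 — 11 statements merged into one kernel-verified Lean document; each statement's English description precedes it below -/
import Mathlib

section
/- Let K be a field containing a primitive N-th root of unity ζ, and let a = (a_0, a_1, a_2, ...) be an N-periodic sequence over K (i.e., a_{i+N} = a_i for all i ≥ 0). Then the linear complexity of a (the least t ≥ 0 such that there exist λ_0, ..., λ_{t-1} ∈ K with a_{j+t} = Σ_{i=0}^{t-1} λ_i a_{j+i} for all j ≥ 0) equals the Hamming weight of the discrete Fourier transform of (a_0, ..., a_{N-1}), that is, the number of indices l ∈ {0, ..., N-1} for which Σ_{i=0}^{N-1} a_i ζ^{-il} ≠ 0. -/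
open Finset Polynomial

private lemma blahut_geom_aux {K : Type*} [Field K] [DecidableEq K] {N : ℕ} (x : K)
    (hx : x ^ N = 1) :
    ∑ l ∈ Finset.range N, x ^ l = if x = 1 then (N : K) else 0 := by
  split_ifs with h
  · subst h; simp
  · have h2 : (∑ l ∈ Finset.range N, x ^ l) * (x - 1) = 0 := by
      rw [geom_sum_mul, hx, sub_self]
    exact (mul_eq_zero.mp h2).resolve_right (sub_ne_zero.mpr h)

private lemma blahut_per_mod {K : Type*} {N : ℕ} (f : ℕ → K)
    (hf : ∀ i, f (i + N) = f i) (j : ℕ) : f j = f (j % N) := by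
  conv_lhs => rw [← Nat.mod_add_div j N]
  generalize j / N = k
  induction k with
  | zero => simp
  | succ k ih =>
      have h : j % N + N * (k + 1) = (j % N + N * k) + N := by ring
      rw [h, hf]; exact ih

/-- **Blahut's theorem.** The linear complexity of an `N`-periodic sequence over a field
containing a primitive `N`-th root of unity equals the Hamming weight of the discrete
Fourier transform of its first `N` values. -/
theorem blahut_linear_complexity_eq_dft_weight
    {K : Type*} [Field K] [DecidableEq K] (N : ℕ) (hN : 0 < N) (ζ : K)
    (hζ : IsPrimitiveRoot ζ N) (a : ℕ → K) (hper : ∀ i : ℕ, a (i + N) = a i) :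
    IsLeast {t : ℕ | ∃ lam : ℕ → K,
        ∀ j : ℕ, a (j + t) = ∑ i ∈ Finset.range t, lam i * a (j + i)}
      ((Finset.range N).filter
        (fun l => ∑ i ∈ Finset.range N, a i * ζ⁻¹ ^ (i * l) ≠ 0)).card := by
  classical
  haveI : NeZero N := ⟨hN.ne'⟩
  have hNK : (N : K) ≠ 0 := hζ.neZero'.out
  have hζN : ζ ^ N = 1 := hζ.pow_eq_one
  have hζ0 : ζ ≠ 0 := hζ.ne_zero hN.ne'
  set S : Finset ℕ := (Finset.range N).filter
      (fun l => ∑ i ∈ Finset.range N, a i * ζ⁻¹ ^ (i * l) ≠ 0) with hSdef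
  set b : ℕ → K := fun l => (∑ i ∈ Finset.range N, a i * ζ⁻¹ ^ (i * l)) / N with hbdef
  -- orthogonality helper
  have horth : ∀ l m : ℕ, l < N → m < N →
      ∑ j ∈ Finset.range N, (ζ ^ l * ζ⁻¹ ^ m) ^ j = if l = m then (N : K) else 0 := by
    intro l m hl hm
    have hx : (ζ ^ l * ζ⁻¹ ^ m) ^ N = 1 := by
      rw [mul_pow, ← pow_mul, mul_comm l N, pow_mul, hζN, one_pow, ← pow_mul,
        mul_comm m N, pow_mul, inv_pow, hζN, inv_one, one_pow, one_mul]
    rw [blahut_geom_aux _ hx]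
    have hiff : ζ ^ l * ζ⁻¹ ^ m = 1 ↔ l = m := by
      rw [inv_pow, mul_inv_eq_one₀ (pow_ne_zero _ hζ0)]
      exact ⟨fun h => hζ.pow_inj hl hm h, fun h => by rw [h]⟩
    simp only [hiff]
  -- b vanishes off S
  have hb0 : ∀ l ∈ Finset.range N, l ∉ S → b l = 0 := by
    intro l hlN hl
    have h0 : ∑ i ∈ Finset.range N, a i * ζ⁻¹ ^ (i * l) = 0 := by
      by_contra h
      exact hl (Finset.mem_filter.mpr ⟨hlN, h⟩)
    show (∑ i ∈ Finset.range N, a i * ζ⁻¹ ^ (i * l)) / N = 0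
    rw [h0, zero_div]
  have hbne : ∀ m ∈ S, b m ≠ 0 := fun m hm =>
    div_ne_zero (Finset.mem_filter.mp hm).2 hNK
  -- inverse DFT representation on range N
  have hg : ∀ r, r < N → ∑ l ∈ Finset.range N, b l * (ζ ^ l) ^ r = a r := by
    intro r hr
    calc ∑ l ∈ Finset.range N, b l * (ζ ^ l) ^ r
        = ∑ l ∈ Finset.range N, ∑ i ∈ Finset.range N,
            a i / N * (ζ ^ r * ζ⁻¹ ^ i) ^ l := by
          refine Finset.sum_congr rfl fun l _ => ?_
          show (∑ i ∈ Finset.range N, a i * ζ⁻¹ ^ (i * l)) / N * (ζ ^ l) ^ r = _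
          rw [div_mul_eq_mul_div, Finset.sum_mul, Finset.sum_div]
          refine Finset.sum_congr rfl fun i _ => ?_
          rw [mul_pow, pow_right_comm ζ r l, pow_mul ζ⁻¹ i l]
          ring
      _ = ∑ i ∈ Finset.range N, a i / N * ∑ l ∈ Finset.range N, (ζ ^ r * ζ⁻¹ ^ i) ^ l := by
          rw [Finset.sum_comm]
          exact Finset.sum_congr rfl fun i _ => (Finset.mul_sum _ _ _).symm
      _ = ∑ i ∈ Finset.range N, a i / N * (if r = i then (N : K) else 0) := by
          refine Finset.sum_congr rfl fun i hi => ?_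
          rw [horth r i hr (Finset.mem_range.mp hi)]
      _ = a r := by
          simp only [mul_ite, mul_zero]
          rw [Finset.sum_ite_eq (Finset.range N) r fun i => a i / N * N]
          simp [Finset.mem_range.mpr hr, div_mul_cancel₀ _ hNK]
  -- representation for all indices
  have rep : ∀ j, a j = ∑ l ∈ Finset.range N, b l * (ζ ^ l) ^ j := by
    intro j
    have hgper : ∀ i, (∑ l ∈ Finset.range N, b l * (ζ ^ l) ^ (i + N))
        = ∑ l ∈ Finset.range N, b l * (ζ ^ l) ^ i := by
      intro i
      refine Finset.sum_congr rfl fun l _ => ?_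
      have h1 : (ζ ^ l) ^ N = 1 := by
        rw [← pow_mul, mul_comm l N, pow_mul, hζN, one_pow]
      rw [pow_add, h1, mul_one]
    rw [blahut_per_mod a hper j,
      blahut_per_mod (fun j => ∑ l ∈ Finset.range N, b l * (ζ ^ l) ^ j) hgper j]
    exact (hg _ (Nat.mod_lt _ hN)).symm
  -- representation over S
  have repS : ∀ j, a j = ∑ l ∈ S, b l * (ζ ^ l) ^ j := by
    intro j
    rw [rep j]
    refine (Finset.sum_subset (Finset.filter_subset _ _) fun l hl hls => ?_).symm
    rw [hb0 l hl hls, zero_mul]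
  -- the DFT functional applied to shifts
  have hF : ∀ m ∈ S, ∀ k : ℕ,
      ∑ j ∈ Finset.range N, ζ⁻¹ ^ (j * m) * a (j + k)
        = (N : K) * (b m * (ζ ^ m) ^ k) := by
    intro m hm k
    have hmN : m < N := Finset.mem_range.mp (Finset.mem_filter.mp hm).1
    calc ∑ j ∈ Finset.range N, ζ⁻¹ ^ (j * m) * a (j + k)
        = ∑ j ∈ Finset.range N, ∑ l ∈ Finset.range N,
            b l * (ζ ^ l) ^ k * (ζ ^ l * ζ⁻¹ ^ m) ^ j := by
          refine Finset.sum_congr rfl fun j _ => ?_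
          rw [rep (j + k), Finset.mul_sum]
          refine Finset.sum_congr rfl fun l _ => ?_
          rw [mul_pow, pow_add, mul_comm j m, pow_mul ζ⁻¹ m j]
          ring
      _ = ∑ l ∈ Finset.range N, b l * (ζ ^ l) ^ k *
            ∑ j ∈ Finset.range N, (ζ ^ l * ζ⁻¹ ^ m) ^ j := by
          rw [Finset.sum_comm]
          exact Finset.sum_congr rfl fun l _ => (Finset.mul_sum _ _ _).symm
      _ = ∑ l ∈ Finset.range N, b l * (ζ ^ l) ^ k * (if l = m then (N : K) else 0) := by
          refine Finset.sum_congr rfl fun l hl => ?_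
          rw [horth l m (Finset.mem_range.mp hl) hmN]
      _ = (N : K) * (b m * (ζ ^ m) ^ k) := by
          simp only [mul_ite, mul_zero]
          rw [Finset.sum_ite_eq' (Finset.range N) m fun l => b l * (ζ ^ l) ^ k * N]
          simp only [Finset.mem_range.mpr hmN, if_true]
          ring
  constructor
  · -- membership : S.card is achievable
    set Q : K[X] := ∏ l ∈ S, (X - C (ζ ^ l)) with hQ
    have hQmonic : Q.Monic := monic_prod_of_monic _ _ fun l _ => monic_X_sub_C _
    have hQdeg : Q.natDegree = S.card := by
      rw [hQ, natDegree_prod_of_monic _ _ fun l _ => monic_X_sub_C _]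
      simp only [natDegree_X_sub_C, Finset.sum_const, smul_eq_mul, mul_one]
    have heval : ∀ l ∈ S, (ζ ^ l) ^ S.card
        = ∑ i ∈ Finset.range S.card, (- Q.coeff i) * (ζ ^ l) ^ i := by
      intro l hl
      have hroot : Q.eval (ζ ^ l) = 0 := by
        rw [hQ, eval_prod]
        exact Finset.prod_eq_zero hl (by simp)
      rw [eval_eq_sum_range, hQdeg, Finset.sum_range_succ] at hroot
      have hlc : Q.coeff S.card = 1 := by
        rw [← hQdeg]; exact hQmonic.coeff_natDegree
      rw [hlc, one_mul] at hroot
      have h4 : (ζ ^ l) ^ S.card = -∑ x ∈ Finset.range S.card, Q.coeff x * (ζ ^ l) ^ x :=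
        eq_neg_of_add_eq_zero_right hroot
      rw [h4, ← Finset.sum_neg_distrib]
      exact Finset.sum_congr rfl fun i _ => by ring
    refine ⟨fun i => - Q.coeff i, fun j => ?_⟩
    calc a (j + S.card) = ∑ l ∈ S, b l * (ζ ^ l) ^ (j + S.card) := repS _
      _ = ∑ l ∈ S, ∑ i ∈ Finset.range S.card,
            (- Q.coeff i) * (b l * (ζ ^ l) ^ (j + i)) := by
          refine Finset.sum_congr rfl fun l hl => ?_
          rw [pow_add, heval l hl, Finset.mul_sum, Finset.mul_sum]
          refine Finset.sum_congr rfl fun i _ => ?_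
          rw [pow_add]; ring
      _ = ∑ i ∈ Finset.range S.card, (- Q.coeff i) * a (j + i) := by
          rw [Finset.sum_comm]
          refine Finset.sum_congr rfl fun i _ => ?_
          rw [repS (j + i), Finset.mul_sum]
  · -- lower bound
    rintro t ⟨lam, hlam⟩
    set P : K[X] := X ^ t - ∑ i ∈ Finset.range t, C (lam i) * X ^ i with hP
    have hPcoeff : P.coeff t = 1 := by
      rw [hP, coeff_sub, coeff_X_pow, if_pos rfl, finset_sum_coeff]
      rw [Finset.sum_eq_zero, sub_zero]
      intro i hi
      rw [coeff_C_mul, coeff_X_pow, if_neg (Nat.ne_of_lt (Finset.mem_range.mp hi)).symm,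
        mul_zero]
    have hPne : P ≠ 0 := fun h => one_ne_zero (by rw [← hPcoeff, h, coeff_zero])
    have hPdeg : P.natDegree ≤ t := by
      refine (natDegree_sub_le _ _).trans (max_le (le_of_eq (natDegree_X_pow t)) ?_)
      exact natDegree_sum_le_of_forall_le _ _ fun i hi =>
        (natDegree_C_mul_X_pow_le _ _).trans (le_of_lt (Finset.mem_range.mp hi))
    have hroots : ∀ m ∈ S, P.IsRoot (ζ ^ m) := by
      intro m hm
      have hmN : m < N := Finset.mem_range.mp (Finset.mem_filter.mp hm).1
      have h1 := hF m hm t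
      have h2 : ∑ j ∈ Finset.range N, ζ⁻¹ ^ (j * m) * a (j + t)
          = (N : K) * (b m * ∑ i ∈ Finset.range t, lam i * (ζ ^ m) ^ i) := by
        calc ∑ j ∈ Finset.range N, ζ⁻¹ ^ (j * m) * a (j + t)
            = ∑ j ∈ Finset.range N, ∑ i ∈ Finset.range t,
                lam i * (ζ⁻¹ ^ (j * m) * a (j + i)) := by
              refine Finset.sum_congr rfl fun j _ => ?_
              rw [hlam j, Finset.mul_sum]
              exact Finset.sum_congr rfl fun i _ => by ring
          _ = ∑ i ∈ Finset.range t, lam i *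
                ∑ j ∈ Finset.range N, ζ⁻¹ ^ (j * m) * a (j + i) := by
              rw [Finset.sum_comm]
              exact Finset.sum_congr rfl fun i _ => (Finset.mul_sum _ _ _).symm
          _ = ∑ i ∈ Finset.range t, lam i * ((N : K) * (b m * (ζ ^ m) ^ i)) := by
              exact Finset.sum_congr rfl fun i _ => by rw [hF m hm i]
          _ = (N : K) * (b m * ∑ i ∈ Finset.range t, lam i * (ζ ^ m) ^ i) := by
              rw [Finset.mul_sum, Finset.mul_sum]
              exact Finset.sum_congr rfl fun i _ => by ring
      rw [h1] at h2
      have h3 : (ζ ^ m) ^ t = ∑ i ∈ Finset.range t, lam i * (ζ ^ m) ^ i :=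
        mul_left_cancel₀ (hbne m hm) (mul_left_cancel₀ hNK h2)
      show P.eval (ζ ^ m) = 0
      rw [hP, eval_sub, eval_pow, eval_X, eval_finset_sum]
      simp only [eval_mul, eval_C, eval_pow, eval_X]
      rw [h3, sub_self]
    have hinj : Set.InjOn (fun l => ζ ^ l) ↑S := by
      intro x hx y hy hxy
      have hxN : x < N := Finset.mem_range.mp (Finset.mem_filter.mp hx).1
      have hyN : y < N := Finset.mem_range.mp (Finset.mem_filter.mp hy).1
      exact hζ.pow_inj hxN hyN hxy
    calc S.card = (S.image fun l => ζ ^ l).card := (Finset.card_image_of_injOn hinj).symm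
      _ ≤ P.roots.toFinset.card := by
          refine Finset.card_le_card fun x hx => ?_
          obtain ⟨m, hm, rfl⟩ := Finset.mem_image.mp hx
          exact Multiset.mem_toFinset.mpr ((mem_roots hPne).mpr (hroots m hm))
      _ ≤ Multiset.card P.roots := P.roots.toFinset_card_le
      _ ≤ P.natDegree := P.card_roots'
      _ ≤ t := hPdeg
end

section
/- Let K be a field, T ≥ 1 and m, n positive integers with 2T ≤ n ≤ m and 2T dividing m, and let α ∈ K be a primitive m-th root of unity. Consider the sparse polynomial evaluation code C(n,T) = { (f(α^0), f(α^1), ..., f(α^{n-1})) : f ∈ K[z], f has at most T nonzero terms, deg f < m }. Then the minimum Hamming distance of C(n,T), i.e. the least Hamming distance between two distinct codewords, equals ⌊n/(2T)⌋. -/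
open Polynomial Finset

lemma sparse_vanish_block {K : Type*} [Field K] {m : ℕ} {α : K}
    (hα : IsPrimitiveRoot α m) (h : K[X]) (hdeg : h.natDegree < m)
    (a t : ℕ) (hcard : h.support.card ≤ t)
    (hz : ∀ j < t, h.eval (α ^ (a + j)) = 0) : h = 0 := by
  have hm : 0 < m := Nat.pos_of_ne_zero (by omega)
  have hα0 : α ≠ 0 := hα.ne_zero (by omega)
  by_contra hne
  set s := h.support with hs
  set e : Fin s.card → ℕ := fun i => ((s.equivFin.symm i : ℕ)) with he
  have hemem : ∀ i, e i ∈ s := fun i => (s.equivFin.symm i).2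
  have heinj : Function.Injective e := by
    intro i j hij
    have := Subtype.ext (p := fun x => x ∈ s) hij
    exact s.equivFin.symm.injective this
  set v : Fin s.card → K := fun i => α ^ (e i) with hv
  have hvinj : Function.Injective v := by
    intro i j hij
    apply heinj
    have hi : e i < m := lt_of_le_of_lt (le_natDegree_of_mem_supp _ (hemem i)) hdeg
    have hj : e j < m := lt_of_le_of_lt (le_natDegree_of_mem_supp _ (hemem j)) hdeg
    exact hα.pow_inj hi hj hij
  set c : Fin s.card → K := fun i => h.coeff (e i) * α ^ (a * e i) with hc
  have hrow : ∀ j : Fin s.card, (∑ i : Fin s.card, c i * v i ^ (j : ℕ)) = 0 := by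
    intro j
    have hjt : (j : ℕ) < t := lt_of_lt_of_le j.2 hcard
    have hzj := hz j hjt
    rw [Polynomial.eval_eq_sum, Polynomial.sum_def] at hzj
    rw [← hzj, ← hs, ← Finset.sum_coe_sort s]
    apply Fintype.sum_equiv s.equivFin.symm
    intro i
    simp only [hc, hv, he]
    rw [← pow_mul, ← pow_mul, mul_assoc, ← pow_add]
    ring_nf
  have hc0 : c = 0 := Matrix.eq_zero_of_forall_pow_sum_mul_pow_eq_zero hvinj hrow
  obtain ⟨x, hx⟩ := Polynomial.nonempty_support_iff.mpr hne
  set i := s.equivFin ⟨x, hx⟩ with hi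
  have hex : e i = x := by simp [he, hi]
  have := congrFun hc0 i
  simp only [hc, Pi.zero_apply, hex] at this
  rcases mul_eq_zero.mp this with h1 | h1
  · exact (Polynomial.mem_support_iff.mp hx) h1
  · exact pow_ne_zero _ hα0 h1

lemma count_dvd_succ (n d : ℕ) :
    (Finset.univ.filter fun i : Fin n => d ∣ (i : ℕ) + 1).card = n / d := by
  rw [← Nat.Ioc_filter_dvd_card_eq_div]
  refine Finset.card_bij (fun i _ => (i : ℕ) + 1) ?_ ?_ ?_
  · intro i hi
    simp only [Finset.mem_filter, Finset.mem_univ, true_and] at hi ⊢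
    simp only [Finset.mem_Ioc]
    exact ⟨⟨Nat.succ_pos _, i.2⟩, hi⟩
  · intro i _ j _ hij
    ext
    omega
  · intro x hx
    simp only [Finset.mem_filter, Finset.mem_Ioc] at hx
    refine ⟨⟨x - 1, by omega⟩, ?_, ?_⟩
    · simp only [Finset.mem_filter, Finset.mem_univ, true_and]
      have hx1 : x - 1 + 1 = x := by omega
      rw [hx1]
      exact hx.2
    · simp only
      omega

lemma support_card_sum_le {K : Type*} [Semiring K] {ι : Type*} [DecidableEq ι] (s : Finset ι)
    (p : ι → K[X]) (hp : ∀ i ∈ s, (p i).support.card ≤ 1) :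
    (∑ i ∈ s, p i).support.card ≤ s.card := by
  classical
  induction s using Finset.induction_on with
  | empty => simp
  | @insert a s hnot ih =>
    rw [Finset.sum_insert hnot]
    calc ((p a) + ∑ i ∈ s, p i).support.card
        ≤ ((p a).support ∪ (∑ i ∈ s, p i).support).card :=
          Finset.card_le_card (Polynomial.support_add)
      _ ≤ (p a).support.card + (∑ i ∈ s, p i).support.card := Finset.card_union_le _ _
      _ ≤ 1 + s.card := by
          have h1 := hp a (Finset.mem_insert_self a s)
          have h2 := ih (fun i hi => hp i (Finset.mem_insert_of_mem hi))
          omega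
      _ = (insert a s).card := by rw [Finset.card_insert_of_notMem hnot]; omega

/-- The sparse polynomial evaluation code with evaluation points the consecutive powers
of a primitive `m`-th root of unity, where `2T ∣ m`, has minimum Hamming distance
`⌊n / (2T)⌋`. -/
theorem sparse_interpolation_code_min_dist
    {K : Type*} [Field K] [DecidableEq K]
    (T m n : ℕ) (hT : 1 ≤ T) (hn : 2 * T ≤ n) (hnm : n ≤ m) (hdvd : 2 * T ∣ m)
    (α : K) (hα : IsPrimitiveRoot α m) :
    IsLeast {d : ℕ | ∃ f g : Polynomial K,
        f.support.card ≤ T ∧ f.natDegree < m ∧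
        g.support.card ≤ T ∧ g.natDegree < m ∧
        (fun i : Fin n => f.eval (α ^ (i : ℕ))) ≠ (fun i : Fin n => g.eval (α ^ (i : ℕ))) ∧
        d = hammingDist (fun i : Fin n => f.eval (α ^ (i : ℕ)))
              (fun i : Fin n => g.eval (α ^ (i : ℕ)))}
      (n / (2 * T)) := by
  have hm : 0 < m := by omega
  have : NeZero m := ⟨by omega⟩
  have hmK : ((m : ℕ) : K) ≠ 0 := hα.neZero'.out
  obtain ⟨s, hms⟩ := hdvd
  have hs1 : 1 ≤ s := by
    rcases Nat.eq_zero_or_pos s with h0 | h0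
    · subst h0; simp at hms; omega
    · exact h0
  have h2T : ((2 * T : ℕ) : K) ≠ 0 := by
    intro h0
    apply hmK
    rw [hms]
    push_cast at h0 ⊢
    rw [h0]
    ring
  have hα0 : α ≠ 0 := hα.ne_zero (by omega)
  have hkpos : 1 ≤ n / (2 * T) := (Nat.one_le_div_iff (by omega)).mpr hn
  constructor
  · -- membership: explicit codewords at distance n/(2T)
    set f : K[X] := ∑ j ∈ Finset.range T, C (α ^ (s * j)) * X ^ (s * j) with hf
    set g : K[X] := ∑ j ∈ Finset.range T, C (-(α ^ (s * (T + j)))) * X ^ (s * (T + j)) with hg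
    have keyterm : ∀ i j : ℕ, α ^ (s * j) * ((α ^ i) ^ (s * j)) = (α ^ (s * (i + 1))) ^ j := by
      intro i j
      rw [← pow_mul, ← pow_mul, ← pow_add]
      congr 1
      ring
    have hev : ∀ i : ℕ, f.eval (α ^ i) - g.eval (α ^ i)
        = ∑ j ∈ Finset.range (2 * T), (α ^ (s * (i + 1))) ^ j := by
      intro i
      have e1 : f.eval (α ^ i) = ∑ j ∈ Finset.range T, (α ^ (s * (i + 1))) ^ j := by
        rw [hf, eval_finset_sum]
        refine Finset.sum_congr rfl fun j _ => ?_
        simp only [eval_mul, eval_C, eval_pow, eval_X]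
        exact keyterm i j
      have e2 : g.eval (α ^ i) = -∑ j ∈ Finset.range T, (α ^ (s * (i + 1))) ^ (T + j) := by
        rw [hg, eval_finset_sum, ← Finset.sum_neg_distrib]
        refine Finset.sum_congr rfl fun j _ => ?_
        simp only [eval_mul, eval_C, eval_pow, eval_X, map_neg, neg_mul, eval_neg]
        rw [keyterm i (T + j)]
      rw [e1, e2, sub_neg_eq_add,
        ← Finset.sum_range_add_sum_Ico _ (show T ≤ 2 * T by omega),
        Finset.sum_Ico_eq_sum_range, show 2 * T - T = T from by omega]
    have hzeta_pow : ∀ i : ℕ, (α ^ (s * (i + 1))) ^ (2 * T) = 1 := by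
      intro i
      rw [← pow_mul, hα.pow_eq_one_iff_dvd]
      exact ⟨i + 1, by rw [hms]; ring⟩
    have hzeta_one : ∀ i : ℕ, (α ^ (s * (i + 1)) = 1 ↔ 2 * T ∣ i + 1) := by
      intro i
      rw [hα.pow_eq_one_iff_dvd, hms,
        show s * (i + 1) = (i + 1) * s by ring,
        Nat.mul_dvd_mul_iff_right (show 0 < s by omega)]
    have hgeom : ∀ i : ℕ, (f.eval (α ^ i) ≠ g.eval (α ^ i)) ↔ 2 * T ∣ i + 1 := by
      intro i
      rw [← sub_ne_zero, hev i]
      by_cases hz1 : α ^ (s * (i + 1)) = 1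
      · refine iff_of_true ?_ ((hzeta_one i).mp hz1)
        rw [hz1]
        simp only [one_pow, Finset.sum_const, Finset.card_range, nsmul_eq_mul, mul_one]
        exact_mod_cast h2T
      · refine iff_of_false ?_ (fun hd => hz1 ((hzeta_one i).mpr hd))
        rw [geom_sum_eq hz1, hzeta_pow i]
        simp
    have hfun_ne : (fun i : Fin n => f.eval (α ^ (i : ℕ)))
        ≠ (fun i : Fin n => g.eval (α ^ (i : ℕ))) := by
      intro hEq
      have h1 := congrFun hEq ⟨2 * T - 1, by omega⟩
      simp only at h1
      exact (hgeom (2 * T - 1)).mpr ⟨1, by omega⟩ h1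
    have hdist : hammingDist (fun i : Fin n => f.eval (α ^ (i : ℕ)))
        (fun i : Fin n => g.eval (α ^ (i : ℕ))) = n / (2 * T) := by
      unfold hammingDist
      rw [← count_dvd_succ n (2 * T)]
      congr 1
      refine Finset.filter_congr fun i _ => ?_
      simpa using hgeom (i : ℕ)
    have hsuppf : f.support.card ≤ T := by
      rw [hf]
      have := support_card_sum_le (Finset.range T)
        (fun j => C (α ^ (s * j)) * X ^ (s * j))
        (fun j _ => card_support_C_mul_X_pow_le_one)
      simpa using this
    have hsuppg : g.support.card ≤ T := by
      rw [hg]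
      have := support_card_sum_le (Finset.range T)
        (fun j => C (-(α ^ (s * (T + j)))) * X ^ (s * (T + j)))
        (fun j _ => card_support_C_mul_X_pow_le_one)
      simpa using this
    have hmrw : m = (2 * T - 1) * s + s := by
      calc m = 2 * T * s := hms
        _ = ((2 * T - 1) + 1) * s := by rw [show (2 * T - 1) + 1 = 2 * T by omega]
        _ = (2 * T - 1) * s + s := by ring
    have hdegf : f.natDegree < m := by
      rw [hf]
      have hb : ∀ j ∈ Finset.range T,
          (C (α ^ (s * j)) * X ^ (s * j)).natDegree ≤ (2 * T - 1) * s := by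
        intro j hj
        refine le_trans (natDegree_C_mul_X_pow_le _ _) ?_
        rw [Finset.mem_range] at hj
        calc s * j = j * s := by ring
          _ ≤ (2 * T - 1) * s := Nat.mul_le_mul_right s (by omega)
      have := natDegree_sum_le_of_forall_le (Finset.range T) _ hb
      omega
    have hdegg : g.natDegree < m := by
      rw [hg]
      have hb : ∀ j ∈ Finset.range T,
          (C (-(α ^ (s * (T + j)))) * X ^ (s * (T + j))).natDegree ≤ (2 * T - 1) * s := by
        intro j hj
        refine le_trans (natDegree_C_mul_X_pow_le _ _) ?_
        rw [Finset.mem_range] at hj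
        calc s * (T + j) = (T + j) * s := by ring
          _ ≤ (2 * T - 1) * s := Nat.mul_le_mul_right s (by omega)
      have := natDegree_sum_le_of_forall_le (Finset.range T) _ hb
      omega
    exact ⟨f, g, hsuppf, hdegf, hsuppg, hdegg, hfun_ne, hdist.symm⟩
  · -- lower bound
    rintro d ⟨f, g, hf1, hf2, hg1, hg2, hfg, rfl⟩
    set h := f - g with hh
    have hhne : h ≠ 0 := by
      intro h0
      apply hfg
      have hfg' : f = g := sub_eq_zero.mp h0
      rw [hfg']
    have hhcard : h.support.card ≤ 2 * T := by
      calc h.support.card ≤ (f.support ∪ (-g).support).card := by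
            rw [hh, sub_eq_add_neg]
            exact Finset.card_le_card (Polynomial.support_add)
        _ ≤ f.support.card + (-g).support.card := Finset.card_union_le _ _
        _ ≤ 2 * T := by rw [Polynomial.support_neg]; omega
    have hhdeg : h.natDegree < m := lt_of_le_of_lt (natDegree_sub_le f g) (max_lt hf2 hg2)
    have hblock : ∀ t : ℕ, t < n / (2 * T) → ∃ j, j < 2 * T ∧ h.eval (α ^ (2 * T * t + j)) ≠ 0 := by
      intro t ht
      by_contra hcon
      push_neg at hcon
      exact hhne (sparse_vanish_block hα h hhdeg (2 * T * t) (2 * T) hhcard hcon)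
    have hblock' : ∀ t : ℕ, ∃ j, j < 2 * T ∧
        (t < n / (2 * T) → h.eval (α ^ (2 * T * t + j)) ≠ 0) := by
      intro t
      by_cases ht : t < n / (2 * T)
      · obtain ⟨j, hj1, hj2⟩ := hblock t ht
        exact ⟨j, hj1, fun _ => hj2⟩
      · exact ⟨0, by omega, fun c => absurd c ht⟩
    choose j hj1 hj2 using hblock'
    have hnpos : 0 < n := by omega
    have hlt : ∀ t : ℕ, t < n / (2 * T) → 2 * T * t + j t < n := by
      intro t ht
      have h1 : 2 * T * (t + 1) ≤ 2 * T * (n / (2 * T)) := Nat.mul_le_mul_left _ (by omega)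
      have h2 : 2 * T * (n / (2 * T)) ≤ n := Nat.mul_div_le n (2 * T)
      have h3 : 2 * T * (t + 1) = 2 * T * t + 2 * T := by ring
      have := hj1 t
      omega
    unfold hammingDist
    calc n / (2 * T) = (Finset.range (n / (2 * T))).card := (Finset.card_range _).symm
      _ ≤ _ := by
          refine Finset.card_le_card_of_injOn
            (fun t => (⟨(2 * T * t + j t) % n, Nat.mod_lt _ hnpos⟩ : Fin n)) ?_ ?_
          · intro t ht
            rw [Finset.coe_range, Set.mem_Iio] at ht
            simp only [Finset.mem_coe, Finset.mem_filter, Finset.mem_univ, true_and]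
            have hmod : (2 * T * t + j t) % n = 2 * T * t + j t := Nat.mod_eq_of_lt (hlt t ht)
            simp only [hmod]
            have hne0 := hj2 t ht
            rw [hh, eval_sub] at hne0
            exact sub_ne_zero.mp hne0
          · intro t ht t' ht' hEq
            rw [Finset.coe_range, Set.mem_Iio] at ht ht'
            have hv : 2 * T * t + j t = 2 * T * t' + j t' := by
              have := congrArg (fun x : Fin n => (x : ℕ)) hEq
              simpa [Nat.mod_eq_of_lt (hlt t ht), Nat.mod_eq_of_lt (hlt t' ht')] using this
            rcases lt_trichotomy t t' with hc | hc | hc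
            · exfalso
              have : 2 * T * (t + 1) ≤ 2 * T * t' := Nat.mul_le_mul_left _ (by omega)
              have h3 : 2 * T * (t + 1) = 2 * T * t + 2 * T := by ring
              have := hj1 t
              omega
            · exact hc
            · exfalso
              have : 2 * T * (t' + 1) ≤ 2 * T * t := Nat.mul_le_mul_left _ (by omega)
              have h3 : 2 * T * (t' + 1) = 2 * T * t' + 2 * T := by ring
              have := hj1 t'
              omega
end

section
/- Let K be a field, T ≥ 1 and m positive integers, and let α ∈ K be a primitive m-th root of unity. If f, g ∈ K[z] each have at most T nonzero terms and degree less than m, and f(α^j) = g(α^j) for 2T consecutive exponents j = j_0, j_0+1, ..., j_0+2T−1 (for some j_0 ≥ 0), then f = g. -/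
open Polynomial

/-- Two polynomials with at most `T` nonzero terms and degree `< m` that agree on `2T`
consecutive powers `α^{j₀}, α^{j₀+1}, …, α^{j₀+2T-1}` of a primitive `m`-th root of
unity `α` are equal. -/
theorem sparse_eq_of_eval_eq_on_consecutive_powers
    {K : Type*} [Field K] (T m : ℕ) (hT : 1 ≤ T) (hm : 0 < m)
    (α : K) (hα : IsPrimitiveRoot α m) (f g : Polynomial K)
    (hf : f.support.card ≤ T) (hfd : f.natDegree < m)
    (hg : g.support.card ≤ T) (hgd : g.natDegree < m)
    (j0 : ℕ) (h : ∀ i < 2 * T, f.eval (α ^ (j0 + i)) = g.eval (α ^ (j0 + i))) :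
    f = g := by
  rw [← sub_eq_zero]
  by_contra hp
  set p := f - g with hpdef
  have hαne : α ≠ 0 := by
    intro h0
    have := hα.pow_eq_one
    rw [h0, zero_pow hm.ne'] at this
    exact zero_ne_one this
  have hsub : p.support ⊆ f.support ∪ g.support := by
    intro a ha
    simp only [Finset.mem_union, mem_support_iff] at ha ⊢
    by_contra hc
    push_neg at hc
    simp [hpdef, coeff_sub, hc.1, hc.2] at ha
  have hsupp : p.support.card ≤ 2 * T := by
    calc p.support.card ≤ (f.support ∪ g.support).card := Finset.card_le_card hsub
      _ ≤ f.support.card + g.support.card := Finset.card_union_le _ _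
      _ ≤ 2 * T := by omega
  have hdeg : p.natDegree < m := lt_of_le_of_lt (natDegree_sub_le f g) (max_lt hfd hgd)
  have heval : ∀ i < 2 * T, p.eval (α ^ (j0 + i)) = 0 := by
    intro i hi
    simp [hpdef, eval_sub, h i hi]
  -- enumerate the support
  set n := p.support.card with hn
  set e : Fin n ↪o ℕ := p.support.orderEmbOfFin rfl with he
  have hemem : ∀ j : Fin n, (e j) ∈ p.support := fun j => p.support.orderEmbOfFin_mem rfl j
  have hex : ∀ j : Fin n, e j < m := fun j =>
    lt_of_le_of_lt (le_natDegree_of_mem_supp _ (hemem j)) hdeg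
  set x : Fin n → K := fun j => α ^ (e j : ℕ) with hx
  have hxinj : Function.Injective x := by
    intro a b hab
    exact e.injective (hα.pow_inj (hex a) (hex b) hab)
  set w : Fin n → K := fun j => p.coeff (e j) * α ^ (j0 * (e j)) with hw
  have hiso : ∀ a (ha : a ∈ p.support),
      e ((p.support.orderIsoOfFin rfl).symm ⟨a, ha⟩) = a := by
    intro a ha
    rw [he, ← Finset.coe_orderIsoOfFin_apply]
    exact congrArg Subtype.val ((p.support.orderIsoOfFin rfl).apply_symm_apply ⟨a, ha⟩)
  have key : ∀ i : Fin n, (∑ j : Fin n, w j * x j ^ (i : ℕ)) = 0 := by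
    intro i
    have hi : (i : ℕ) < 2 * T := lt_of_lt_of_le i.2 hsupp
    have h0 := heval i hi
    rw [eval_eq_sum, Polynomial.sum] at h0
    rw [← h0]
    apply Finset.sum_bij (fun (j : Fin n) (_ : j ∈ Finset.univ) => (e j : ℕ))
    · intro j _; exact hemem j
    · intro a _ b _ hab; exact e.injective hab
    · intro a ha
      exact ⟨(p.support.orderIsoOfFin rfl).symm ⟨a, ha⟩, Finset.mem_univ _, hiso a ha⟩
    · intro j _
      simp only [hw, hx]
      rw [mul_assoc, ← pow_mul, ← pow_mul, ← pow_add]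
      congr 1
      ring
  have hweq : w = 0 := Matrix.eq_zero_of_forall_pow_sum_mul_pow_eq_zero hxinj key
  -- contradiction: support is nonempty
  obtain ⟨a, ha⟩ := nonempty_support_iff.mpr hp
  set j : Fin n := (p.support.orderIsoOfFin rfl).symm ⟨a, ha⟩ with hj
  have : w j = 0 := by rw [hweq]; rfl
  rw [hw] at this
  simp only [hj, hiso a ha] at this
  rcases mul_eq_zero.mp this with h1 | h2
  · exact (mem_support_iff.mp ha) h1
  · exact pow_ne_zero _ hαne h2
end

section
/- Let K be a field, t ≥ 1 and m positive integers, α ∈ K a primitive m-th root of unity, and let s be a positive integer with gcd(s, m) = 1 and r ≥ 0 an integer. If f, g ∈ K[z] each have at most t nonzero terms and degree less than m, and f(α^{r+is}) = g(α^{r+is}) for all i = 0, 1, ..., 2t−1, then f = g. (Hence a single error-free affine sub-sequence of length 2t of evaluations suffices to determine a t-sparse polynomial.) -/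
open Polynomial

/-- Two polynomials with at most `t` nonzero terms and degree `< m` that agree on the
affine (arithmetic-progression indexed) sub-sequence of evaluation points
`α^r, α^{r+s}, …, α^{r+(2t-1)s}` with `gcd(s, m) = 1` are equal. -/
theorem sparse_eq_of_eval_eq_on_affine_subsequence
    {K : Type*} [Field K] (t m : ℕ) (ht : 1 ≤ t) (hm : 0 < m)
    (α : K) (hα : IsPrimitiveRoot α m) (r s : ℕ) (hs : 1 ≤ s)
    (hgcd : Nat.gcd s m = 1) (f g : Polynomial K)
    (hf : f.support.card ≤ t) (hfd : f.natDegree < m)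
    (hg : g.support.card ≤ t) (hgd : g.natDegree < m)
    (h : ∀ i < 2 * t, f.eval (α ^ (r + i * s)) = g.eval (α ^ (r + i * s))) :
    f = g := by
  have hα1 : α ^ m = 1 := hα.pow_eq_one
  have hα0 : α ≠ 0 := hα.ne_zero hm.ne'
  -- reduce powers mod m
  have hpow : ∀ a : ℕ, α ^ a = α ^ (a % m) := by
    intro a
    conv_lhs => rw [← Nat.mod_add_div a m, pow_add, pow_mul, hα1, one_pow, mul_one]
  set p := f - g with hp
  suffices hps : p = 0 by
    have := sub_eq_zero.mp hps
    exact this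
  by_contra hp0
  set n := p.support.card with hn
  have hn2t : n ≤ 2 * t := by
    have hsupp : p.support ⊆ f.support ∪ g.support := by
      intro a ha
      rw [Polynomial.mem_support_iff] at ha
      by_contra hc
      simp only [Finset.mem_union, Polynomial.mem_support_iff, not_or, not_not] at hc
      rw [hp, coeff_sub, hc.1, hc.2, sub_self] at ha
      exact ha rfl
    calc n ≤ (f.support ∪ g.support).card := Finset.card_le_card hsupp
      _ ≤ f.support.card + g.support.card := Finset.card_union_le _ _
      _ ≤ 2 * t := by omega
  have hnpos : 0 < n := Finset.card_pos.mpr (nonempty_support_iff.mpr hp0)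
  set e : Fin n ↪o ℕ := p.support.orderEmbOfFin rfl with he
  have hemem : ∀ j, e j ∈ p.support := fun j => Finset.orderEmbOfFin_mem _ _ _
  have helt : ∀ j, e j < m := by
    intro j
    have h1 : e j ≤ p.natDegree := le_natDegree_of_mem_supp _ (hemem j)
    have h2 : p.natDegree < m :=
      lt_of_le_of_lt (natDegree_sub_le f g) (max_lt hfd hgd)
    omega
  -- injectivity of x j := α ^ (s * e j)
  set x : Fin n → K := fun j => α ^ (s * e j) with hx
  have hxinj : Function.Injective x := by
    intro j k hjk
    have : (s * e j) % m = (s * e k) % m := by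
      apply hα.pow_inj (Nat.mod_lt _ hm) (Nat.mod_lt _ hm)
      rw [← hpow, ← hpow]; exact hjk
    have hmod : (s * e j) % m = (s * e k) % m := this
    have : e j % m = e k % m := by
      have hmul : s * e j ≡ s * e k [MOD m] := hmod
      exact Nat.ModEq.cancel_left_of_coprime (Nat.Coprime.symm hgcd) hmul
    have : e j = e k := by
      rwa [Nat.mod_eq_of_lt (helt j), Nat.mod_eq_of_lt (helt k)] at this
    exact e.injective this
  -- the matrix
  set M : Matrix (Fin n) (Fin n) K := fun i j => x j ^ (i : ℕ) with hM
  have hdet : M.det ≠ 0 := by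
    have : M = (Matrix.vandermonde x).transpose := by
      ext i j; simp [hM, Matrix.vandermonde, Matrix.transpose]
    rw [this, Matrix.det_transpose, Matrix.det_vandermonde]
    apply Finset.prod_ne_zero_iff.mpr
    intro i _
    apply Finset.prod_ne_zero_iff.mpr
    intro j hj
    rw [Finset.mem_Ioi] at hj
    exact sub_ne_zero_of_ne fun hc => (hj.ne' (hxinj hc))
  set d : Fin n → K := fun j => p.coeff (e j) * α ^ (r * e j) with hd
  -- support as image
  have himg : Finset.image (fun j => e j) Finset.univ = p.support := by
    apply Finset.eq_of_subset_of_card_le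
    · intro a ha
      obtain ⟨j, _, rfl⟩ := Finset.mem_image.mp ha
      exact hemem j
    · rw [Finset.card_image_of_injective _ e.injective, Finset.card_univ, Fintype.card_fin]
  have hmv : M.mulVec d = 0 := by
    funext i
    have hi : (i : ℕ) < 2 * t := lt_of_lt_of_le i.2 hn2t
    have heval : p.eval (α ^ (r + i * s)) = 0 := by
      rw [hp, eval_sub, h i hi, sub_self]
    have : p.eval (α ^ (r + i * s)) = ∑ j, M i j * d j := by
      rw [eval_eq_sum, Polynomial.sum, ← himg,
        Finset.sum_image (fun a _ b _ hab => e.injective hab)]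
      congr 1
      funext j
      simp only [hM, hd, hx]
      rw [← pow_mul, ← pow_mul,
        show (r + (i : ℕ) * s) * e j = s * e j * (i : ℕ) + r * e j by ring, pow_add]
      ring
    simp only [Matrix.mulVec, dotProduct, Pi.zero_apply]
    rw [← this, heval]
  have hd0 : d = 0 := by
    have hu : IsUnit M := (Matrix.isUnit_iff_isUnit_det M).mpr (isUnit_iff_ne_zero.mpr hdet)
    have := Matrix.mulVec_injective_iff_isUnit.mpr hu
    apply this
    rw [hmv, Matrix.mulVec_zero]
  have j0 : Fin n := ⟨0, hnpos⟩
  have : p.coeff (e j0) = 0 := by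
    have := congrFun hd0 j0
    simp only [hd, Pi.zero_apply] at this
    rcases mul_eq_zero.mp this with h1 | h2
    · exact h1
    · exact absurd h2 (pow_ne_zero _ hα0)
  exact (mem_support_iff.mp (hemem j0)) this
end

section
/- Let k be a prime, i ≥ 1 an integer, and set n_i = ((k−2)k^i + 1)/(k−1). Then for all integers r ≥ 0 and s ≥ 1 with r + (k−1)s ≤ n_i − 1, there exists j with 0 ≤ j ≤ k−1 such that the number r + js has at least one digit equal to k−1 in its base-k expansion. In other words, every k-term arithmetic progression contained in {0, 1, ..., n_i − 1} meets the set S of integers having some base-k digit equal to k−1. -/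
lemma mem_digits_of_div_mod (k : ℕ) (hk : 2 ≤ k) (e : ℕ) :
    ∀ n d : ℕ, d ≠ 0 → (n / k ^ e) % k = d → d ∈ Nat.digits k n := by
  induction e with
  | zero =>
    intro n d hd h
    simp only [pow_zero, Nat.div_one] at h
    have hn : 0 < n := by
      rcases Nat.eq_zero_or_pos n with rfl | h'
      · simp at h; omega
      · exact h'
    rw [Nat.digits_def' (by omega : 1 < k) hn]
    simp [h]
  | succ e ih =>
    intro n d hd h
    have hn : 0 < n := by
      rcases Nat.eq_zero_or_pos n with rfl | h'
      · simp at h; omega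
      · exact h'
    rw [Nat.digits_def' (by omega : 1 < k) hn]
    have h' : ((n / k) / k ^ e) % k = d := by
      rw [Nat.div_div_eq_div_mul, ← pow_succ']
      exact h
    exact List.mem_cons_of_mem _ (ih (n / k) d hd h')

/-- For `k` prime and `n_i = ((k-2)·k^i + 1)/(k-1)`, every `k`-term arithmetic
progression `r, r+s, …, r+(k-1)s` contained in `{0, …, n_i - 1}` contains a number
having at least one digit equal to `k-1` in its base-`k` expansion. -/
theorem ap_meets_digit_set (k : ℕ) (hk : k.Prime) (i : ℕ) (hi : 1 ≤ i) :
    ∀ r s : ℕ, 1 ≤ s → r + (k - 1) * s ≤ ((k - 2) * k ^ i + 1) / (k - 1) - 1 →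
      ∃ j ≤ k - 1, (k - 1) ∈ Nat.digits k (r + j * s) := by
  intro r s hs _hbound
  have hk2 : 2 ≤ k := hk.two_le
  haveI : Fact k.Prime := ⟨hk⟩
  set e := s.factorization k with he
  set t := s / k ^ e with ht
  have hst : k ^ e * t = s := Nat.ordProj_mul_ordCompl_eq_self s k
  have htk : ¬ k ∣ t := Nat.not_dvd_ordCompl hk (by omega)
  have hu : (t : ZMod k) ≠ 0 := by
    rw [Ne, ZMod.natCast_eq_zero_iff]
    exact htk
  set jz : ZMod k := (((k - 1 : ℕ) : ZMod k) - ((r / k ^ e : ℕ) : ZMod k)) * (t : ZMod k)⁻¹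
    with hjz
  refine ⟨jz.val, by have := jz.val_lt; omega, ?_⟩
  apply mem_digits_of_div_mod k hk2 e _ (k - 1) (by omega)
  have hdiv : (r + jz.val * s) / k ^ e = r / k ^ e + jz.val * t := by
    conv_lhs => rw [← hst]
    rw [show r + jz.val * (k ^ e * t) = r + k ^ e * (jz.val * t) by ring]
    rw [Nat.add_mul_div_left _ _ (pow_pos hk.pos e)]
  rw [hdiv]
  have hcast : ((r / k ^ e + jz.val * t : ℕ) : ZMod k) = ((k - 1 : ℕ) : ZMod k) := by
    push_cast
    rw [ZMod.natCast_val, ZMod.cast_id, hjz]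
    field_simp
    ring
  have hmod := (ZMod.natCast_eq_natCast_iff _ _ _).mp hcast
  have h2 : (k - 1) % k = k - 1 := Nat.mod_eq_of_lt (by omega)
  unfold Nat.ModEq at hmod
  omega
end

section
/- Let k be a prime with k ≥ 3, let i ≥ 1 be an integer, and set n = ((k−2)k^i + 1)/(k−1). Then n − (k−1)^i − 1 ≤ (n/(k−2)) · log_k(n/(k−2)), where log_k denotes the logarithm to base k. (Consequently, in the worst case, the number E of errors decodable by the affine sub-sequence list decoder from n evaluations satisfies E ≤ (n/(k−2)) · log_k(n/(k−2)).) -/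
/-- Bernoulli-type inequality in ℕ: `k^i * (k-1-i) ≤ (k-1)^(i+1)`. -/
lemma ber_nat (k : ℕ) : ∀ i : ℕ, k ^ i * (k - 1 - i) ≤ (k - 1) ^ (i + 1) := by
  intro i
  induction i with
  | zero => simp
  | succ i ih =>
    by_cases h : k ≤ i + 2
    · have h0 : k - 1 - (i + 1) = 0 := by omega
      simp [h0]
    · obtain ⟨j, hj⟩ : ∃ j, k = i + 3 + j := ⟨k - (i + 3), by omega⟩
      have h1 : k - 1 - (i + 1) = j + 1 := by omega
      have h2 : k - 1 - i = j + 2 := by omega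
      have h3 : k * (j + 1) ≤ (k - 1) * (j + 2) := by
        subst hj; simp [Nat.add_sub_cancel]; nlinarith
      calc k ^ (i + 1) * (k - 1 - (i + 1)) = k ^ i * (k * (j + 1)) := by
            rw [h1]; ring
        _ ≤ k ^ i * ((k - 1) * (j + 2)) := Nat.mul_le_mul_left _ h3
        _ = (k - 1) * (k ^ i * (k - 1 - i)) := by rw [h2]; ring
        _ ≤ (k - 1) * (k - 1) ^ (i + 1) := Nat.mul_le_mul_left _ ih
        _ = (k - 1) ^ (i + 1 + 1) := by ring

/-- For `k ≥ 3` prime, `i ≥ 1` and `n = ((k-2)·k^i + 1)/(k-1)`, one has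
`n - (k-1)^i - 1 ≤ (n/(k-2)) · log_k(n/(k-2))`. -/
theorem decoding_radius_upper_bound (k : ℕ) (hk : k.Prime) (hk3 : 3 ≤ k)
    (i : ℕ) (hi : 1 ≤ i) :
    ((((k - 2) * k ^ i + 1) / (k - 1) : ℕ) : ℝ) - ((k : ℝ) - 1) ^ i - 1 ≤
      ((((k - 2) * k ^ i + 1) / (k - 1) : ℕ) : ℝ) / ((k : ℝ) - 2) *
        Real.logb (k : ℝ)
          (((((k - 2) * k ^ i + 1) / (k - 1) : ℕ) : ℝ) / ((k : ℝ) - 2)) := by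
  set N : ℕ := ((k - 2) * k ^ i + 1) / (k - 1) with hNdef
  -- exact division
  have hki1 : 1 ≤ k ^ i := Nat.one_le_pow _ _ (by omega)
  have hdvd : (k - 1) ∣ (k - 2) * k ^ i + 1 := by
    have h1 : (k - 1) ∣ k ^ i - 1 := by
      simpa using Nat.sub_dvd_pow_sub_pow k 1 i
    obtain ⟨c, hc⟩ := h1
    refine ⟨(k - 2) * c + 1, ?_⟩
    have : k ^ i = (k - 1) * c + 1 := by omega
    rw [this]; ring_nf; omega
  have hN : N * (k - 1) = (k - 2) * k ^ i + 1 := Nat.div_mul_cancel hdvd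
  -- key nat inequalities
  have hlow : (k - 2) * k ^ (i - 1) ≤ N := by
    have h1 : (k - 2) * k ^ (i - 1) * (k - 1) ≤ N * (k - 1) := by
      rw [hN]
      have : k ^ (i - 1) * (k - 1) ≤ k ^ (i - 1) * k :=
        Nat.mul_le_mul_left _ (by omega)
      have hk' : k ^ (i - 1) * k = k ^ i := by
        rw [← pow_succ]; congr 1; omega
      calc (k - 2) * k ^ (i - 1) * (k - 1) = (k - 2) * (k ^ (i - 1) * (k - 1)) := by ring
        _ ≤ (k - 2) * k ^ i := by rw [← hk']; exact Nat.mul_le_mul_left _ this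
        _ ≤ (k - 2) * k ^ i + 1 := Nat.le_succ _
    exact Nat.le_of_mul_le_mul_right h1 (by omega)
  have hkey : (k - 2) * N ≤ (i - 1) * N + ((k - 1) ^ i + 1) * (k - 2) := by
    by_cases hik : k - 1 ≤ i
    · have : (k - 2) * N ≤ (i - 1) * N := Nat.mul_le_mul_right _ (by omega)
      omega
    · -- i ≤ k - 2
      refine Nat.le_of_mul_le_mul_right ?_ (show 0 < k - 1 by omega)
      have hsplit : k - 2 = (i - 1) + (k - 1 - i) := by omega
      have hber := ber_nat k i
      have hle1 : k - 1 - i ≤ (k - 2) * (k - 1) := by nlinarith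
      calc (k - 2) * N * (k - 1)
          = (i - 1) * (N * (k - 1)) + (k - 1 - i) * (N * (k - 1)) := by
            rw [hsplit]; ring
        _ = (i - 1) * (N * (k - 1)) + ((k - 2) * (k ^ i * (k - 1 - i)) + (k - 1 - i)) := by
            rw [hN]; ring
        _ ≤ (i - 1) * (N * (k - 1)) + ((k - 2) * (k - 1) ^ (i + 1) + (k - 2) * (k - 1)) := by
            gcongr
        _ = ((i - 1) * N + ((k - 1) ^ i + 1) * (k - 2)) * (k - 1) := by
            rw [pow_succ]; ring
  -- move to ℝ
  have hkR : (3 : ℝ) ≤ (k : ℝ) := by exact_mod_cast hk3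
  have hk2R : (0 : ℝ) < (k : ℝ) - 2 := by linarith
  have hnn : (0 : ℝ) ≤ (N : ℝ) / ((k : ℝ) - 2) :=
    div_nonneg (Nat.cast_nonneg _) (le_of_lt hk2R)
  have hcast2 : ((k - 2 : ℕ) : ℝ) = (k : ℝ) - 2 := by
    have : (2 : ℕ) ≤ k := by omega
    push_cast [this]; ring
  have hcast1 : ((k - 1 : ℕ) : ℝ) = (k : ℝ) - 1 := by
    have : (1 : ℕ) ≤ k := by omega
    push_cast [this]; ring
  have hcasti : ((i - 1 : ℕ) : ℝ) = (i : ℝ) - 1 := by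
    push_cast [hi]; ring
  -- step 1 : N - (k-1)^i - 1 ≤ N/(k-2) * (i-1)
  have step1 : (N : ℝ) - ((k : ℝ) - 1) ^ i - 1 ≤ (N : ℝ) / ((k : ℝ) - 2) * ((i : ℝ) - 1) := by
    have h := hkey
    have hR : ((k : ℝ) - 2) * N ≤ ((i : ℝ) - 1) * N + (((k : ℝ) - 1) ^ i + 1) * ((k : ℝ) - 2) := by
      have := (Nat.cast_le (α := ℝ)).2 h
      push_cast at this
      rw [hcast2, hcast1, hcasti] at this
      convert this using 2 <;> push_cast <;> ring
    rw [div_mul_eq_mul_div, le_div_iff₀ hk2R]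
    nlinarith
  -- step 2 : logb k (N/(k-2)) ≥ i - 1
  have hx : (k : ℝ) ^ (i - 1 : ℕ) ≤ (N : ℝ) / ((k : ℝ) - 2) := by
    rw [le_div_iff₀ hk2R]
    have := (Nat.cast_le (α := ℝ)).2 hlow
    push_cast at this
    rw [hcast2] at this
    linarith
  have h1k : (1 : ℝ) < (k : ℝ) := by linarith
  have hxpos : (0 : ℝ) < (k : ℝ) ^ (i - 1 : ℕ) := pow_pos (by linarith) _
  have step2 : ((i : ℝ) - 1) ≤ Real.logb (k : ℝ) ((N : ℝ) / ((k : ℝ) - 2)) := by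
    have h := (Real.logb_le_logb h1k hxpos (lt_of_lt_of_le hxpos hx)).2 hx
    rwa [Real.logb_pow, Real.logb_self_eq_one h1k, mul_one, hcasti] at h
  calc (N : ℝ) - ((k : ℝ) - 1) ^ i - 1
      ≤ (N : ℝ) / ((k : ℝ) - 2) * ((i : ℝ) - 1) := step1
    _ ≤ (N : ℝ) / ((k : ℝ) - 2) * Real.logb (k : ℝ) ((N : ℝ) / ((k : ℝ) - 2)) :=
        mul_le_mul_of_nonneg_left step2 hnn
end

section
/- Let T ≥ 1 and n ≥ 2T be integers and let ξ_0, ..., ξ_{n−1} be n pairwise distinct positive real numbers. Consider the sparse polynomial evaluation code C(n,T) = { (f(ξ_0), ..., f(ξ_{n−1})) : f ∈ ℝ[z] has at most T nonzero terms }. Then the minimum Hamming distance of C(n,T) equals n − 2T + 1; that is, any two distinct codewords differ in at least n − 2T + 1 coordinates, and there exist two distinct codewords differing in exactly n − 2T + 1 coordinates. -/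
open Polynomial Finset

/-- A nonzero real polynomial with at most `t` terms has fewer than `t` positive roots. -/
lemma sparse_pos_roots : ∀ t : ℕ, ∀ p : Polynomial ℝ, p ≠ 0 → p.support.card ≤ t →
    ∀ S : Finset ℝ, (∀ x ∈ S, 0 < x ∧ p.eval x = 0) → S.card < t := by
  intro t
  induction t with
  | zero =>
    intro p hp hcard S hS
    exact absurd (Finset.card_eq_zero.mp (Nat.le_zero.mp hcard))
      (by simpa [Polynomial.support_eq_empty] using hp)
  | succ t IH =>
    intro p hp hcard S hS
    -- strip off the power of X
    set m := p.rootMultiplicity 0 with hm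
    obtain ⟨q, hq⟩ : (X : Polynomial ℝ) ^ m ∣ p := by
      simpa using Polynomial.pow_rootMultiplicity_dvd p 0
    have hq0 : q ≠ 0 := by rintro rfl; simp at hq; exact hp hq
    have hqc0 : q.coeff 0 ≠ 0 := by
      intro h0
      obtain ⟨r, hr⟩ : (X : Polynomial ℝ) ∣ q := Polynomial.X_dvd_iff.mpr h0
      have : (X - C (0:ℝ)) ^ (m + 1) ∣ p := by
        refine ⟨r, ?_⟩
        simp only [map_zero, sub_zero]
        rw [hq, hr]; ring
      exact Polynomial.pow_rootMultiplicity_not_dvd hp 0 this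
    -- supports
    have hsupp : q.support.card ≤ p.support.card := by
      apply Finset.card_le_card_of_injOn (fun k => k + m)
      · intro k hk
        rw [Finset.mem_coe, Polynomial.mem_support_iff] at hk ⊢
        rwa [hq, Polynomial.coeff_X_pow_mul]
      · intro a _ b _ hab; simpa using hab
    -- S consists of positive roots of q
    have hSq : ∀ x ∈ S, 0 < x ∧ q.eval x = 0 := by
      intro x hx
      obtain ⟨hx0, hxp⟩ := hS x hx
      refine ⟨hx0, ?_⟩
      rw [hq, Polynomial.eval_mul, Polynomial.eval_pow, Polynomial.eval_X] at hxp
      rcases mul_eq_zero.mp hxp with h | h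
      · exact absurd (pow_eq_zero_iff'.mp h).1 (ne_of_gt hx0)
      · exact h
    by_cases hq' : derivative q = 0
    · -- q is a nonzero constant, no roots
      have : S = ∅ := by
        rw [Finset.eq_empty_iff_forall_notMem]
        intro x hx
        have := (hSq x hx).2
        rw [Polynomial.eq_C_of_derivative_eq_zero hq'] at this
        simp at this
        exact hqc0 this
      simp [this]
    · -- Rolle argument
      have hq'supp : (derivative q).support.card ≤ t := by
        have h1 : ((derivative q).support.image (· + 1)).card = (derivative q).support.card :=
          Finset.card_image_of_injective _ (fun a b => by omega)
        have h2 : (derivative q).support.image (· + 1) ⊆ q.support.erase 0 := by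
          intro n hn
          simp only [Finset.mem_image] at hn
          obtain ⟨k, hk, rfl⟩ := hn
          rw [Polynomial.mem_support_derivative] at hk
          exact Finset.mem_erase.mpr ⟨by omega, hk⟩
        have h3 : (q.support.erase 0).card = q.support.card - 1 := by
          rw [Finset.card_erase_of_mem (Polynomial.mem_support_iff.mpr hqc0)]
        have := Finset.card_le_card h2
        omega
      set Tset := (derivative q).roots.toFinset.filter (fun z => 0 < z) with hTset
      have hT : Tset.card < t := by
        apply IH (derivative q) hq' hq'supp
        intro z hz
        rw [hTset, Finset.mem_filter, Multiset.mem_toFinset, Polynomial.mem_roots hq'] at hz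
        exact ⟨hz.2, hz.1⟩
      have hcardS : S.card ≤ Tset.card + 1 := by
        apply Finset.card_le_of_interleaved
        intro x hx y hy hxy _
        obtain ⟨z, hz, hz'⟩ := exists_deriv_eq_zero hxy q.continuousOn
          ((hSq x hx).2.trans (hSq y hy).2.symm)
        refine ⟨z, ?_, hz.1, hz.2⟩
        rw [Polynomial.deriv] at hz'
        rw [hTset, Finset.mem_filter, Multiset.mem_toFinset, Polynomial.mem_roots hq']
        exact ⟨hz', lt_trans (hSq x hx).1 hz.1⟩
      omega

lemma card_support_sum_monomial_le {α : Type*} (s : Finset α) (e : α → ℕ) (c : α → ℝ) :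
    (∑ k ∈ s, (monomial (e k) (c k) : Polynomial ℝ)).support.card ≤ s.card := by
  classical
  refine le_trans (Finset.card_le_card ?_) (Finset.card_image_le (f := e))
  intro n hn
  rw [Polynomial.mem_support_iff, Polynomial.finset_sum_coeff] at hn
  obtain ⟨k, hk, hk'⟩ := Finset.exists_ne_zero_of_sum_ne_zero hn
  rw [Polynomial.coeff_monomial] at hk'
  by_cases h : e k = n
  · exact Finset.mem_image.mpr ⟨k, hk, h⟩
  · simp [h] at hk'

lemma sum_range_two_mul {M : Type*} [AddCommMonoid M] (f : ℕ → M) (T : ℕ) :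
    ∑ i ∈ Finset.range (2*T), f i = ∑ k ∈ Finset.range T, (f (2*k) + f (2*k+1)) := by
  induction T with
  | zero => simp
  | succ T ih =>
    have : 2 * (T + 1) = (2 * T + 1) + 1 := by ring
    rw [this, Finset.sum_range_succ, Finset.sum_range_succ, Finset.sum_range_succ, ih,
      add_assoc]

/-- The sparse polynomial evaluation code at `n` pairwise distinct positive real points
has minimum Hamming distance exactly `n - 2T + 1`. -/
theorem real_sparse_code_min_dist (T n : ℕ) (hT : 1 ≤ T) (hn : 2 * T ≤ n)
    (ξ : Fin n → ℝ) (hinj : Function.Injective ξ) (hpos : ∀ i, 0 < ξ i) :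
    IsLeast {d : ℕ | ∃ f g : Polynomial ℝ,
        f.support.card ≤ T ∧ g.support.card ≤ T ∧
        (fun i : Fin n => f.eval (ξ i)) ≠ (fun i : Fin n => g.eval (ξ i)) ∧
        d = hammingDist (fun i : Fin n => f.eval (ξ i)) (fun i : Fin n => g.eval (ξ i))}
      (n - 2 * T + 1) := by
  classical
  constructor
  · -- membership: construct the extremal pair
    obtain ⟨I, -, hI⟩ : ∃ I ⊆ (Finset.univ : Finset (Fin n)), I.card = 2*T - 1 :=
      Finset.exists_subset_card_eq (by simp; omega)
    set h : Polynomial ℝ := ∏ i ∈ I, (X - C (ξ i)) with hh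
    have hdeg : h.natDegree < 2*T := by
      calc h.natDegree ≤ ∑ i ∈ I, (X - C (ξ i)).natDegree := Polynomial.natDegree_prod_le _ _
        _ = ∑ i ∈ I, 1 := by simp
        _ = 2*T - 1 := by rw [Finset.sum_const, hI]; simp
        _ < 2*T := by omega
    have heval : ∀ j : Fin n, (h.eval (ξ j) = 0 ↔ j ∈ I) := by
      intro j
      rw [hh, Polynomial.eval_prod]
      simp only [Polynomial.eval_sub, Polynomial.eval_X, Polynomial.eval_C]
      rw [Finset.prod_eq_zero_iff]
      constructor
      · rintro ⟨i, hi, hzero⟩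
        have : ξ j = ξ i := by linarith [sub_eq_zero.mp hzero]
        rwa [hinj this]
      · intro hj; exact ⟨j, hj, by ring⟩
    set f : Polynomial ℝ := ∑ k ∈ Finset.range T, monomial (2*k) (h.coeff (2*k)) with hf
    set g : Polynomial ℝ := ∑ k ∈ Finset.range T, monomial (2*k+1) (-(h.coeff (2*k+1))) with hg
    have hfg : f - g = h := by
      rw [hf, hg, ← Finset.sum_sub_distrib]
      have : ∀ k, (monomial (2*k) (h.coeff (2*k)) : Polynomial ℝ)
          - monomial (2*k+1) (-(h.coeff (2*k+1)))
          = monomial (2*k) (h.coeff (2*k)) + monomial (2*k+1) (h.coeff (2*k+1)) := by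
        intro k; rw [map_neg, sub_neg_eq_add]
      simp_rw [this]
      rw [← sum_range_two_mul (fun i => (monomial i (h.coeff i) : Polynomial ℝ)) T]
      exact (Polynomial.as_sum_range' h (2*T) hdeg).symm
    have hevald : ∀ j : Fin n, f.eval (ξ j) - g.eval (ξ j) = h.eval (ξ j) := by
      intro j; rw [← hfg, Polynomial.eval_sub]
    have hne : (fun i : Fin n => f.eval (ξ i)) ≠ (fun i : Fin n => g.eval (ξ i)) := by
      obtain ⟨j, hj⟩ : ∃ j : Fin n, j ∉ I := by
        by_contra hcon
        push_neg at hcon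
        have : (Finset.univ : Finset (Fin n)).card ≤ I.card :=
          Finset.card_le_card (fun x _ => hcon x)
        simp [hI] at this
        omega
      intro heq
      have := congrFun heq j
      have h0 : h.eval (ξ j) = 0 := by rw [← hevald j, this]; ring
      exact hj ((heval j).mp h0)
    refine ⟨f, g, card_support_sum_monomial_le _ _ _ |>.trans (by simp),
      card_support_sum_monomial_le _ _ _ |>.trans (by simp), hne, ?_⟩
    have hfilter : (Finset.univ.filter fun j : Fin n =>
        ¬ (f.eval (ξ j) = g.eval (ξ j))) = Iᶜ := by
      ext j
      simp only [Finset.mem_filter, Finset.mem_univ, true_and, Finset.mem_compl]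
      rw [← heval j, ← hevald j, ← sub_eq_zero (a := f.eval (ξ j))]
    have hd : hammingDist (fun i : Fin n => f.eval (ξ i)) (fun i : Fin n => g.eval (ξ i))
        = (Finset.univ.filter fun j : Fin n => ¬ (f.eval (ξ j) = g.eval (ξ j))).card := by
      simp [hammingDist, ne_eq]
    rw [hd, hfilter, Finset.card_compl, hI]
    simp only [Fintype.card_fin]
    omega
  · -- lower bound
    rintro d ⟨f, g, hfc, hgc, hne, rfl⟩
    set h : Polynomial ℝ := f - g with hh
    have hne0 : h ≠ 0 := by
      intro h0
      exact hne (funext fun i => by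
        have : f.eval (ξ i) - g.eval (ξ i) = 0 := by rw [← Polynomial.eval_sub, ← hh, h0]; simp
        linarith)
    have hsupp : h.support.card ≤ 2*T := by
      have hsub : h.support ⊆ f.support ∪ g.support := by
        intro k hk
        rw [Polynomial.mem_support_iff, hh, Polynomial.coeff_sub] at hk
        rw [Finset.mem_union, Polynomial.mem_support_iff, Polynomial.mem_support_iff]
        by_contra hcon
        push_neg at hcon
        rw [hcon.1, hcon.2, sub_zero] at hk
        exact hk rfl
      calc h.support.card ≤ (f.support ∪ g.support).card := Finset.card_le_card hsub
        _ ≤ f.support.card + g.support.card := Finset.card_union_le _ _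
        _ ≤ 2*T := by omega
    set A := ({i | f.eval (ξ i) = g.eval (ξ i)} : Finset (Fin n)) with hA
    have hAcard : A.card < 2*T := by
      have := sparse_pos_roots (2*T) h hne0 hsupp (A.image ξ) ?_
      · rwa [Finset.card_image_of_injective _ hinj] at this
      · intro x hx
        obtain ⟨i, hi, rfl⟩ := Finset.mem_image.mp hx
        rw [hA, Finset.mem_filter] at hi
        refine ⟨hpos i, ?_⟩
        rw [hh, Polynomial.eval_sub, hi.2, sub_self]
    have hd : hammingDist (fun i : Fin n => f.eval (ξ i)) (fun i : Fin n => g.eval (ξ i))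
        = (Finset.univ.filter fun j : Fin n => ¬ (f.eval (ξ j) = g.eval (ξ j))).card := by
      simp [hammingDist, ne_eq]
    have hsplit := Finset.card_filter_add_card_filter_not
      (s := (Finset.univ : Finset (Fin n))) (p := fun i => f.eval (ξ i) = g.eval (ξ i))
    simp only [Finset.card_univ, Fintype.card_fin] at hsplit
    have hAeq : A = Finset.univ.filter fun i : Fin n => f.eval (ξ i) = g.eval (ξ i) := rfl
    rw [hd]
    rw [hAeq] at hAcard
    omega
end

section
/- Let f ∈ ℝ[z] be a polynomial with at most t nonzero terms (t ≥ 1). If f vanishes at t pairwise distinct positive real numbers, then f = 0. Equivalently, a nonzero real polynomial with at most t nonzero terms has at most t − 1 distinct positive real roots. -/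
open Polynomial

private lemma sparse_aux : ∀ t : ℕ, ∀ f : Polynomial ℝ, f.support.card ≤ t →
    ∀ η : Fin t → ℝ, StrictMono η → (∀ i, 0 < η i) → (∀ i, f.eval (η i) = 0) → f = 0 := by
  intro t
  induction t with
  | zero =>
    intro f hf _ _ _ _
    exact support_eq_empty.mp (Finset.card_eq_zero.mp (Nat.le_zero.mp hf))
  | succ t ih =>
    intro f hf η hmono hpos hroot
    by_contra hne
    set m := f.natTrailingDegree with hm
    have hdvd : (X : Polynomial ℝ) ^ m ∣ f :=
      X_pow_dvd_iff.mpr fun d hd => coeff_eq_zero_of_lt_natTrailingDegree hd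
    obtain ⟨g, hg⟩ := hdvd
    have hcoeff : ∀ n, g.coeff n = f.coeff (m + n) := by
      intro n; rw [hg, Nat.add_comm m n, coeff_X_pow_mul]
    have hg0 : g.coeff 0 ≠ 0 := by
      rw [hcoeff, Nat.add_zero]
      exact coeff_natTrailingDegree_ne_zero.mpr hne
    -- support of f is the shifted support of g
    have hsupp : f.support = g.support.image (m + ·) := by
      ext n
      simp only [mem_support_iff, Finset.mem_image]
      constructor
      · intro hn
        have hmn : m ≤ n := natTrailingDegree_le_of_ne_zero hn
        exact ⟨n - m, by rw [hcoeff, Nat.add_sub_cancel' hmn]; exact hn,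
          Nat.add_sub_cancel' hmn⟩
      · rintro ⟨k, hk, rfl⟩
        rw [← hcoeff]; exact hk
    have hgcard : g.support.card ≤ t + 1 := by
      rw [hsupp] at hf
      exact le_trans (Finset.card_le_card_of_injOn _ (fun x hx => Finset.mem_image_of_mem _ hx)
        (fun a _ b _ h => by omega)) hf
    -- g vanishes at all η i
    have hgroot : ∀ i, g.eval (η i) = 0 := by
      intro i
      have := hroot i
      rw [hg, eval_mul, eval_pow, eval_X] at this
      have hne' : (η i) ^ m ≠ 0 := pow_ne_zero _ (hpos i).ne'
      exact (mul_eq_zero.mp this).resolve_left hne'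
    -- derivative of g
    set h := g.derivative with hh
    have hhcard : h.support.card ≤ t := by
      have hsub : h.support ⊆ (g.support.erase 0).image (· - 1) := by
        intro n hn
        rw [mem_support_iff, hh, coeff_derivative] at hn
        have : g.coeff (n + 1) ≠ 0 := fun h0 => hn (by rw [h0, zero_mul])
        exact Finset.mem_image.mpr ⟨n + 1, Finset.mem_erase.mpr ⟨Nat.succ_ne_zero n,
          mem_support_iff.mpr this⟩, by omega⟩
      calc h.support.card ≤ ((g.support.erase 0).image (· - 1)).card :=
            Finset.card_le_card hsub
        _ ≤ (g.support.erase 0).card := Finset.card_image_le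
        _ = g.support.card - 1 := Finset.card_erase_of_mem (mem_support_iff.mpr hg0)
        _ ≤ t := by omega
    -- Rolle between consecutive roots
    have hrolle : ∀ i : Fin t, ∃ c ∈ Set.Ioo (η i.castSucc) (η i.succ), h.eval c = 0 := by
      intro i
      have hab : η i.castSucc < η i.succ := hmono (show i.castSucc < i.succ from Fin.castSucc_lt_succ)
      obtain ⟨c, hc, hc0⟩ := exists_deriv_eq_zero hab
        g.continuous.continuousOn ((hgroot i.castSucc).trans (hgroot i.succ).symm)
      refine ⟨c, hc, ?_⟩
      rw [← Polynomial.deriv]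
      exact hc0
    choose ζ hζmem hζroot using hrolle
    have hζmono : StrictMono ζ := by
      intro i j hij
      calc ζ i < η i.succ := (hζmem i).2
        _ ≤ η j.castSucc := hmono.monotone (by
            rw [Fin.le_def]; simp only [Fin.val_succ, Fin.coe_castSucc]
            exact hij)
        _ < ζ j := (hζmem j).1
    have hζpos : ∀ i, 0 < ζ i := fun i => (hpos i.castSucc).trans (hζmem i).1
    have hzero : h = 0 := ih h hhcard ζ hζmono hζpos hζroot
    -- g is constant, contradiction
    have hgdeg : g.natDegree = 0 := natDegree_eq_zero_of_derivative_eq_zero hzero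
    have hgC : g = C (g.coeff 0) := eq_C_of_natDegree_eq_zero hgdeg
    have := hgroot 0
    rw [hgC, eval_C] at this
    exact hg0 this

/-- **Descartes' rule consequence.** A real polynomial with at most `t` nonzero terms
vanishing at `t` pairwise distinct positive real numbers is the zero polynomial. -/
theorem sparse_poly_eq_zero_of_positive_roots (t : ℕ) (ht : 1 ≤ t)
    (f : Polynomial ℝ) (hf : f.support.card ≤ t)
    (ξ : Fin t → ℝ) (hinj : Function.Injective ξ) (hpos : ∀ i, 0 < ξ i)
    (hroot : ∀ i, f.eval (ξ i) = 0) :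
    f = 0 := by
  set S : Finset ℝ := Finset.image ξ Finset.univ with hS
  have hcard : S.card = t := by
    rw [hS, Finset.card_image_of_injective _ hinj, Finset.card_univ, Fintype.card_fin]
  set e := S.orderIsoOfFin hcard with he
  refine sparse_aux t f hf (fun i => (e i : ℝ)) (fun i j hij => ?_) (fun i => ?_) (fun i => ?_)
  · exact_mod_cast e.strictMono hij
  · obtain ⟨j, _, hj⟩ := Finset.mem_image.mp (e i).2
    show 0 < (e i : ℝ); rw [← hj]; exact hpos j
  · obtain ⟨j, _, hj⟩ := Finset.mem_image.mp (e i).2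
    show f.eval (e i : ℝ) = 0; rw [← hj]; exact hroot j
end

section
/- Let T ≥ 1 and E ≥ 0 be integers, let ξ_0, ..., ξ_{2T+2E−1} be pairwise distinct positive real numbers, and let f ∈ ℝ[z] have at most T nonzero terms. Suppose values y_0, ..., y_{2T+2E−1} ∈ ℝ are given with y_i = f(ξ_i) for all but at most E indices i. If g ∈ ℝ[z] has at most T nonzero terms and g(ξ_i) = y_i for at least 2T + E indices i, then g = f. In particular, f is uniquely recoverable from 2T + 2E evaluations at distinct positive reals of which at most E are erroneous. -/
open Polynomial

/-- A nonzero real polynomial with `s` nonzero terms has fewer than `s`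
distinct positive real roots. -/
theorem aux_pos_roots_lt_card_support :
    ∀ n : ℕ, ∀ p : Polynomial ℝ, p.natDegree ≤ n → p ≠ 0 →
      ∀ S : Finset ℝ, (∀ x ∈ S, 0 < x) → (∀ x ∈ S, p.eval x = 0) →
      S.card < p.support.card := by
  intro n
  induction n with
  | zero =>
    intro p hdeg hp S hSpos hroot
    have hC : p = C (p.coeff 0) := eq_C_of_natDegree_eq_zero (Nat.le_zero.mp hdeg)
    have hc0 : p.coeff 0 ≠ 0 := by
      intro h; apply hp; rw [hC, h, map_zero]
    have hS : S = ∅ := by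
      by_contra h
      obtain ⟨x, hx⟩ := Finset.nonempty_of_ne_empty h
      have := hroot x hx
      rw [hC] at this
      simp at this
      exact hc0 this
    rw [hS]
    simp only [Finset.card_empty]
    rw [Finset.card_pos]
    exact Finset.nonempty_of_ne_empty (fun h => hp (Polynomial.support_eq_empty.mp h))
  | succ n ih =>
    intro p hdeg hp S hSpos hroot
    rcases eq_or_ne S ∅ with hS | hS
    · rw [hS]
      simp only [Finset.card_empty]
      rw [Finset.card_pos]
      exact Finset.nonempty_of_ne_empty (fun h => hp (Polynomial.support_eq_empty.mp h))
    rcases eq_or_ne (p.coeff 0) 0 with hc0 | hc0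
    · -- p = (divX p) * X : same number of terms, same positive roots
      set q := p.divX with hq
      have hpq : q * X = p := by
        have := Polynomial.divX_mul_X_add p
        rw [hc0] at this; simpa using this
      have hq0 : q ≠ 0 := by
        intro h; apply hp; rw [← hpq, h, zero_mul]
      have hqdeg : q.natDegree ≤ n := by
        have h1 := Polynomial.natDegree_divX_eq_natDegree_tsub_one (p := p)
        have h2 : p.natDegree ≠ 0 := by
          intro h
          have hC : p = C (p.coeff 0) := eq_C_of_natDegree_eq_zero h
          apply hp; rw [hC, hc0, map_zero]
        rw [← hq] at h1
        omega
      have hsupp : p.support = q.support.image (· + 1) := by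
        ext m
        cases m with
        | zero =>
          simp only [Polynomial.mem_support_iff, Finset.mem_image]
          constructor
          · intro h; exact absurd hc0 h
          · rintro ⟨a, _, ha⟩; omega
        | succ k =>
          simp only [Polynomial.mem_support_iff, Finset.mem_image]
          constructor
          · intro h
            exact ⟨k, by rwa [Polynomial.coeff_divX], rfl⟩
          · rintro ⟨a, ha, ha2⟩
            have : a = k := by omega
            subst this
            rwa [Polynomial.coeff_divX] at ha
      have hcard : p.support.card = q.support.card := by
        rw [hsupp, Finset.card_image_of_injective _ (fun a b h => by omega)]
      rw [hcard]
      apply ih q hqdeg hq0 S hSpos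
      intro x hx
      have hx0 : x ≠ 0 := ne_of_gt (hSpos x hx)
      have := hroot x hx
      rw [← hpq] at this
      simp only [Polynomial.eval_mul, Polynomial.eval_X] at this
      exact (mul_eq_zero.mp this).resolve_right hx0
    · -- constant coefficient nonzero: use Rolle on the derivative
      set q := derivative p with hqdef
      obtain ⟨x₀, hx₀⟩ := Finset.nonempty_of_ne_empty hS
      have hq0 : q ≠ 0 := by
        intro h
        have hdz : p.natDegree = 0 := natDegree_eq_zero_of_derivative_eq_zero h
        have hC : p = C (p.coeff 0) := eq_C_of_natDegree_eq_zero hdz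
        have := hroot x₀ hx₀
        rw [hC] at this
        simp at this
        exact hc0 this
      have hpd0 : p.natDegree ≠ 0 := by
        intro h
        have hC : p = C (p.coeff 0) := eq_C_of_natDegree_eq_zero h
        have := hroot x₀ hx₀
        rw [hC] at this
        simp at this
        exact hc0 this
      have hqdeg : q.natDegree ≤ n := by
        rw [hqdef]
        have := Polynomial.natDegree_derivative_lt hpd0
        omega
      -- support of derivative
      have hsupp : p.support.erase 0 = q.support.image (· + 1) := by
        ext m
        cases m with
        | zero =>
          simp only [Finset.mem_erase, Finset.mem_image]
          constructor
          · rintro ⟨h, _⟩; exact absurd rfl h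
          · rintro ⟨a, _, ha⟩; omega
        | succ k =>
          simp only [Finset.mem_erase, Finset.mem_image, Polynomial.mem_support_iff]
          constructor
          · rintro ⟨_, h⟩
            refine ⟨k, ?_, rfl⟩
            rw [hqdef, Polynomial.coeff_derivative]
            intro hcon
            apply h
            have : (k : ℝ) + 1 ≠ 0 := by positivity
            rcases mul_eq_zero.mp hcon with h1 | h2
            · exact h1
            · exact absurd h2 this
          · rintro ⟨a, ha, ha2⟩
            have : a = k := by omega
            subst this
            rw [hqdef, Polynomial.coeff_derivative] at ha
            refine ⟨by omega, fun hcon => ha (by rw [hcon, zero_mul])⟩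
      have h0mem : 0 ∈ p.support := Polynomial.mem_support_iff.mpr hc0
      have hcard : q.support.card = p.support.card - 1 := by
        rw [← Finset.card_erase_of_mem h0mem, hsupp,
          Finset.card_image_of_injective _ (fun a b h => by omega)]
      -- enumerate S in increasing order
      set k := S.card with hk
      have hk1 : 1 ≤ k := Finset.card_pos.mpr ⟨x₀, hx₀⟩
      set e := S.orderIsoOfFin rfl with he
      set x : Fin k → ℝ := fun i => (e i : ℝ) with hx
      have hxmem : ∀ i, x i ∈ S := fun i => (e i).2
      have hxmono : StrictMono x := fun i j hij => by
        have := e.strictMono hij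
        exact_mod_cast this
      have key : ∀ i : Fin (k - 1), ∃ c,
          x ⟨i.1, by omega⟩ < c ∧ c < x ⟨i.1 + 1, by omega⟩ ∧ q.eval c = 0 := by
        intro i
        have hi1 : i.1 < k - 1 := i.2
        set a := x ⟨i.1, by omega⟩
        set b := x ⟨i.1 + 1, by omega⟩
        have hab : a < b := hxmono (by simp [Fin.lt_def])
        have hfa : p.eval a = 0 := hroot _ (hxmem _)
        have hfb : p.eval b = 0 := hroot _ (hxmem _)
        obtain ⟨c, hc, hc2⟩ := exists_deriv_eq_zero hab
          (p.continuousOn) (by rw [hfa, hfb])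
        refine ⟨c, hc.1, hc.2, ?_⟩
        rwa [Polynomial.deriv] at hc2
      choose c hc1 hc2 hc3 using key
      have hcmono : StrictMono c := by
        intro i j hij
        calc c i < x ⟨i.1 + 1, by omega⟩ := hc2 i
          _ ≤ x ⟨j.1, by omega⟩ := by
            apply hxmono.monotone
            simp only [Fin.mk_le_mk]
            exact hij
          _ < c j := hc1 j
      set S' : Finset ℝ := Finset.image c Finset.univ with hS'
      have hS'card : S'.card = k - 1 := by
        rw [hS', Finset.card_image_of_injective _ hcmono.injective, Finset.card_univ,
          Fintype.card_fin]
      have hmain := ih q hqdeg hq0 S' ?_ ?_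
      · rw [hS'card, hcard] at hmain
        have : 1 ≤ p.support.card := Finset.card_pos.mpr ⟨0, h0mem⟩
        omega
      · intro t ht
        rw [hS'] at ht
        obtain ⟨i, _, hi⟩ := Finset.mem_image.mp ht
        have := hc1 i
        have hpos' := hSpos _ (hxmem ⟨i.1, by omega⟩)
        rw [← hi]
        linarith
      · intro t ht
        rw [hS'] at ht
        obtain ⟨i, _, hi⟩ := Finset.mem_image.mp ht
        rw [← hi]
        exact hc3 i

/-- Unique decoding over the positive reals: a `T`-sparse real polynomial is uniquely
recoverable from `2T + 2E` evaluations at pairwise distinct positive reals of which at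
most `E` are erroneous; any `T`-sparse polynomial agreeing with at least `2T + E` of the
received values equals `f`. -/
theorem unique_decoding_positive_reals (T E : ℕ) (hT : 1 ≤ T)
    (ξ : Fin (2 * T + 2 * E) → ℝ) (hinj : Function.Injective ξ) (hpos : ∀ i, 0 < ξ i)
    (f : Polynomial ℝ) (hf : f.support.card ≤ T)
    (y : Fin (2 * T + 2 * E) → ℝ)
    (hy : (Finset.univ.filter (fun i => y i ≠ f.eval (ξ i))).card ≤ E)
    (g : Polynomial ℝ) (hg : g.support.card ≤ T)
    (hgy : 2 * T + E ≤ (Finset.univ.filter (fun i => g.eval (ξ i) = y i)).card) :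
    g = f := by
  by_contra hne
  set h := g - f with hh
  have hh0 : h ≠ 0 := sub_ne_zero.mpr hne
  have hhsupp : h.support.card ≤ 2 * T := by
    have h1 : h.support ⊆ g.support ∪ f.support := by
      rw [hh]
      intro m hm
      rw [Polynomial.mem_support_iff, Polynomial.coeff_sub] at hm
      rw [Finset.mem_union, Polynomial.mem_support_iff, Polynomial.mem_support_iff]
      by_contra hcon
      push_neg at hcon
      rw [hcon.1, hcon.2, sub_zero] at hm
      exact hm rfl
    calc h.support.card ≤ (g.support ∪ f.support).card := Finset.card_le_card h1
      _ ≤ g.support.card + f.support.card := Finset.card_union_le _ _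
      _ ≤ 2 * T := by omega
  set A := Finset.univ.filter (fun i => g.eval (ξ i) = y i) with hA
  set B := Finset.univ.filter (fun i => ¬ (y i ≠ f.eval (ξ i))) with hB
  have hBcard : 2 * T + 2 * E - E ≤ B.card := by
    have := Finset.card_filter_add_card_filter_not
      (s := (Finset.univ : Finset (Fin (2 * T + 2 * E)))) (p := fun i => y i ≠ f.eval (ξ i))
    rw [Finset.card_univ, Fintype.card_fin] at this
    have heq : (Finset.filter (fun a => ¬ y a ≠ f.eval (ξ a)) Finset.univ).card = B.card := by
      rw [hB]
    omega
  have hABcard : 2 * T ≤ (A ∩ B).card := by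
    have hunion : (A ∪ B).card ≤ 2 * T + 2 * E := by
      calc (A ∪ B).card ≤ (Finset.univ : Finset (Fin (2 * T + 2 * E))).card :=
        Finset.card_le_card (Finset.subset_univ _)
        _ = 2 * T + 2 * E := by rw [Finset.card_univ, Fintype.card_fin]
    have := Finset.card_inter_add_card_union A B
    omega
  set S := Finset.image ξ (A ∩ B) with hS
  have hScard : 2 * T ≤ S.card := by
    rw [hS, Finset.card_image_of_injective _ hinj]
    exact hABcard
  have hSpos : ∀ t ∈ S, 0 < t := by
    intro t ht
    obtain ⟨i, _, hi⟩ := Finset.mem_image.mp ht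
    rw [← hi]; exact hpos i
  have hSroot : ∀ t ∈ S, h.eval t = 0 := by
    intro t ht
    obtain ⟨i, hiAB, hi⟩ := Finset.mem_image.mp ht
    rw [Finset.mem_inter] at hiAB
    have hiA : g.eval (ξ i) = y i := (Finset.mem_filter.mp hiAB.1).2
    have hiB : y i = f.eval (ξ i) := by
      have := (Finset.mem_filter.mp hiAB.2).2
      rwa [not_not] at this
    rw [← hi, hh]
    simp only [Polynomial.eval_sub]
    rw [hiA, hiB]
    ring
  have := aux_pos_roots_lt_card_support h.natDegree h le_rfl hh0 S hSpos hSroot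
  omega
end

section
/- Let T ≥ 1, D ≥ 1 and k ≥ 1 be integers with (2T)^k ≥ D^{2T}. Let p_0 < p_1 < ... < p_{n−1} be primes with 2T < p_0, and for each i let ζ_i ∈ ℂ be a primitive p_i-th root of unity (equivalently, ζ_i^{p_i} = 1 and ζ_i ≠ 1). Let f, g ∈ ℚ[z] each have at most T nonzero terms and degree at most D. If f(ζ_i) = g(ζ_i) for at least k indices i ∈ {0, ..., n−1}, then f = g. (Hence the code { (f(ζ_0), ..., f(ζ_{n−1})) : f ∈ ℚ[z] T-sparse of degree ≤ D } has minimum distance at least n − k + 1.) -/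
open Polynomial

lemma key_collision (p : ℕ) (hp : p.Prime) (ζ : ℂ) (hζ1 : ζ ^ p = 1) (hζ2 : ζ ≠ 1)
    (h : Polynomial ℚ) (hh : h ≠ 0) (hcard : h.support.card < p)
    (hev : Polynomial.aeval ζ h = 0) :
    ∃ a ∈ h.support, a ≠ h.natDegree ∧ a % p = h.natDegree % p := by
  haveI : Fact p.Prime := ⟨hp⟩
  have hprim : IsPrimitiveRoot ζ p := by
    have := orderOf_eq_prime hζ1 hζ2
    exact this ▸ IsPrimitiveRoot.orderOf ζ
  set q : Polynomial ℚ := ∑ a ∈ h.support, C (h.coeff a) * X ^ (a % p) with hq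
  have hcoeff : ∀ r, q.coeff r =
      ∑ a ∈ h.support.filter (fun a => a % p = r), h.coeff a := by
    intro r
    rw [hq, finset_sum_coeff, Finset.sum_filter]
    refine Finset.sum_congr rfl fun a _ => ?_
    rw [coeff_C_mul, coeff_X_pow]
    by_cases hr : a % p = r
    · simp [hr]
    · simp [hr]
      exact fun h' => absurd h'.symm hr
  have hζpow : ∀ a : ℕ, ζ ^ a = ζ ^ (a % p) := by
    intro a
    conv_lhs => rw [← Nat.div_add_mod a p, pow_add, pow_mul, hζ1, one_pow, one_mul]
  have hevq : Polynomial.aeval ζ q = 0 := by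
    rw [← hev, hq]
    conv_rhs => rw [h.as_sum_support]
    simp only [map_sum, map_mul, aeval_C, map_pow, aeval_X, aeval_monomial,
      smul_eq_mul]
    refine Finset.sum_congr rfl fun a _ => ?_
    rw [← hζpow a]
  have hq0 : q = 0 := by
    by_contra hq0
    have hdvd : cyclotomic p ℚ ∣ q := by
      rw [cyclotomic_eq_minpoly_rat hprim hp.pos]
      exact minpoly.dvd ℚ ζ hevq
    have hdegq : q.natDegree ≤ p - 1 := by
      refine natDegree_sum_le_of_forall_le _ _ fun a _ => ?_
      exact le_trans (natDegree_C_mul_X_pow_le _ _)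
        (Nat.le_sub_one_of_lt (Nat.mod_lt _ hp.pos))
    obtain ⟨r, hr⟩ := hdvd
    have hrne : r ≠ 0 := fun h0 => hq0 (by simp [hr, h0])
    have hcyc_deg : (cyclotomic p ℚ).natDegree = p - 1 := by
      rw [natDegree_cyclotomic, Nat.totient_prime hp]
    have hdegr : r.natDegree = 0 := by
      have hmul := natDegree_mul (cyclotomic_ne_zero p ℚ) hrne
      rw [← hr, hcyc_deg] at hmul
      omega
    obtain ⟨c, hc⟩ : ∃ c, r = C c := ⟨r.coeff 0, eq_C_of_natDegree_eq_zero hdegr⟩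
    have hcne : c ≠ 0 := fun h0 => hrne (by rw [hc, h0, map_zero])
    have hr0ex : ∃ r0 ∈ Finset.range p, r0 ∉ h.support.image (· % p) := by
      by_contra hcon
      push_neg at hcon
      have := Finset.card_le_card (fun x hx => hcon x hx)
      rw [Finset.card_range] at this
      exact absurd (le_trans this Finset.card_image_le) (not_le.mpr hcard)
    obtain ⟨r0, hr0p, hr0⟩ := hr0ex
    have h1 : q.coeff r0 = 0 := by
      rw [hcoeff]
      refine Finset.sum_eq_zero fun a ha => ?_
      exact absurd (Finset.mem_image.mpr ⟨a, (Finset.mem_filter.mp ha).1,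
        (Finset.mem_filter.mp ha).2⟩) hr0
    have h2 : q.coeff r0 = c := by
      rw [hr, hc, cyclotomic_prime, mul_comm, coeff_C_mul, finset_sum_coeff]
      simp [coeff_X_pow, hr0p]
    exact hcne (h1 ▸ h2.symm)
  have hnd : h.natDegree ∈ h.support := natDegree_mem_support_of_nonzero hh
  by_contra hcon
  push_neg at hcon
  have hfilter : h.support.filter (fun a => a % p = h.natDegree % p) = {h.natDegree} := by
    ext a
    simp only [Finset.mem_filter, Finset.mem_singleton]
    constructor
    · rintro ⟨ha1, ha2⟩
      by_contra hne
      exact hcon a ha1 hne ha2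
    · rintro rfl
      exact ⟨hnd, rfl⟩
  have := hcoeff (h.natDegree % p)
  rw [hq0, coeff_zero, hfilter, Finset.sum_singleton] at this
  exact (mem_support_iff.mp hnd) this.symm

/-- Two `T`-sparse rational polynomials of degree at most `D` that agree at `k` of the
points `ζ_i` — where `ζ_i ≠ 1` is a `p_i`-th root of unity for distinct primes
`2T < p_0 < p_1 < ⋯` and `(2T)^k ≥ D^{2T}` — are equal. -/
theorem sparse_eq_of_eval_eq_at_coprime_order_roots
    (T D k n : ℕ) (hT : 1 ≤ T) (hD : 1 ≤ D) (hk : 1 ≤ k)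
    (hkD : D ^ (2 * T) ≤ (2 * T) ^ k)
    (p : Fin n → ℕ) (hmono : StrictMono p) (hprime : ∀ i, (p i).Prime)
    (hpT : ∀ i, 2 * T < p i)
    (ζ : Fin n → ℂ) (hζ : ∀ i, ζ i ^ p i = 1 ∧ ζ i ≠ 1)
    (f g : Polynomial ℚ) (hf : f.support.card ≤ T) (hfD : f.natDegree ≤ D)
    (hg : g.support.card ≤ T) (hgD : g.natDegree ≤ D)
    (h : k ≤ (Finset.univ.filter
        (fun i => Polynomial.aeval (ζ i) f = Polynomial.aeval (ζ i) g)).card) :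
    f = g := by
  by_contra hne
  set h' : Polynomial ℚ := f - g with hh'
  have hne0 : h' ≠ 0 := sub_ne_zero.mpr hne
  have hsupp : h'.support.card ≤ 2 * T := by
    calc h'.support.card ≤ (f.support ∪ g.support).card :=
          Finset.card_le_card (by
            rw [hh', sub_eq_add_neg]
            exact (support_add).trans (by rw [support_neg]))
      _ ≤ f.support.card + g.support.card := Finset.card_union_le _ _
      _ ≤ 2 * T := by omega
  have hdegh : h'.natDegree ≤ D :=
    le_trans (natDegree_sub_le f g) (max_le hfD hgD)
  set e := h'.natDegree with he
  set S := Finset.univ.filter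
      (fun i => Polynomial.aeval (ζ i) f = Polynomial.aeval (ζ i) g) with hS
  set PP : ℕ := ∏ b ∈ h'.support.erase e, (e - b) with hPP
  have hblt : ∀ b ∈ h'.support.erase e, b < e := by
    intro b hb
    have h1 := (Finset.mem_erase.mp hb).1
    have h2 := le_natDegree_of_mem_supp b (Finset.mem_erase.mp hb).2
    omega
  have hPPpos : 0 < PP := Finset.prod_pos fun b hb => by
    have := hblt b hb; omega
  have hdvd : ∀ i ∈ S, p i ∣ PP := by
    intro i hi
    have hev : Polynomial.aeval (ζ i) h' = 0 := by
      rw [hh', map_sub, sub_eq_zero]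
      exact (Finset.mem_filter.mp hi).2
    obtain ⟨a, ha, hane, hamod⟩ := key_collision (p i) (hprime i) (ζ i)
      (hζ i).1 (hζ i).2 h' hne0 (lt_of_le_of_lt hsupp (hpT i)) hev
    have hale : a ≤ e := le_natDegree_of_mem_supp a ha
    have hpd : p i ∣ e - a := (Nat.modEq_iff_dvd' hale).mp hamod
    exact dvd_trans hpd (Finset.dvd_prod_of_mem _
      (Finset.mem_erase.mpr ⟨hane, ha⟩))
  have hPPle : PP ≤ D ^ (2 * T) := by
    calc PP ≤ D ^ (h'.support.erase e).card := by
          refine Finset.prod_le_pow_card _ _ _ fun b hb => ?_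
          have := le_natDegree_of_mem_supp b (Finset.mem_erase.mp hb).2
          omega
      _ ≤ D ^ (2 * T) := Nat.pow_le_pow_right hD
          (le_trans (Finset.card_le_card (Finset.erase_subset _ _)) hsupp)
  set Q := S.image p with hQ
  have hQcard : k ≤ Q.card := by
    rw [hQ, Finset.card_image_of_injective S hmono.injective]
    exact h
  have hQdvd : (∏ q ∈ Q, q) ∣ PP := by
    refine Finset.prod_primes_dvd _ (fun q hq => ?_) (fun q hq => ?_)
    · obtain ⟨i, _, rfl⟩ := Finset.mem_image.mp hq
      exact (hprime i).prime
    · obtain ⟨i, hi, rfl⟩ := Finset.mem_image.mp hq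
      exact hdvd i hi
  have hlow : (2 * T + 1) ^ k ≤ ∏ q ∈ Q, q := by
    calc (2 * T + 1) ^ k ≤ (2 * T + 1) ^ Q.card :=
          Nat.pow_le_pow_right (by omega) hQcard
      _ ≤ ∏ q ∈ Q, q := by
          refine Finset.pow_card_le_prod _ _ _ fun q hq => ?_
          obtain ⟨i, _, rfl⟩ := Finset.mem_image.mp hq
          have := hpT i
          omega
  have hfin : (2 * T + 1) ^ k ≤ (2 * T) ^ k :=
    le_trans hlow (le_trans (Nat.le_of_dvd hPPpos hQdvd) (le_trans hPPle hkD))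
  have : (2 * T) ^ k < (2 * T + 1) ^ k :=
    Nat.pow_lt_pow_left (by omega) (by omega)
  omega
end

section
/- Let f ∈ ℚ[z] be a nonzero polynomial with at most t nonzero terms, with exponents of its nonzero terms e_1 < e_2 < ... < e_s (s ≤ t), and let p be a prime with p > t such that p does not divide e_s − e_j for any 1 ≤ j ≤ s − 1. Then for any primitive p-th root of unity ζ ∈ ℂ, f(ζ) ≠ 0. (Indeed, the remainder h(z) = f(z) mod (z^p − 1) is nonzero with at most t < p nonzero terms, the term z^{e_s mod p} being isolated in h, and a nonzero rational polynomial of degree less than p with fewer than p terms cannot vanish at ζ.) -/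
open Polynomial

/-- Let `f` be a nonzero rational polynomial with at most `t` nonzero terms, and let
`p > t` be a prime not dividing `e_s - e_j` for any exponent `e_j ≠ e_s` of `f`, where
`e_s = natDegree f` is the largest exponent. Then `f` does not vanish at any primitive
`p`-th root of unity. -/
theorem sparse_nonzero_at_primitive_root (t : ℕ) (f : Polynomial ℚ)
    (hf0 : f ≠ 0) (hft : f.support.card ≤ t)
    (p : ℕ) (hp : p.Prime) (hpt : t < p)
    (hdiv : ∀ e ∈ f.support, e ≠ f.natDegree → ¬ p ∣ (f.natDegree - e))
    (ζ : ℂ) (hζ : IsPrimitiveRoot ζ p) :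
    Polynomial.aeval ζ f ≠ 0 := by
  intro hz
  haveI : Fact p.Prime := ⟨hp⟩
  have hp0 : 0 < p := hp.pos
  set d := f.natDegree with hd
  set g : ℚ[X] := ∑ e ∈ f.support, C (f.coeff e) * X ^ (e % p) with hg
  have hζp : ζ ^ p = 1 := hζ.pow_eq_one
  -- g(ζ) = f(ζ)
  have hgf : aeval ζ g = aeval ζ f := by
    conv_rhs => rw [f.as_sum_support]
    rw [hg, map_sum, map_sum]
    refine Finset.sum_congr rfl fun e he => ?_
    rw [aeval_monomial, map_mul, aeval_C, map_pow, aeval_X]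
    congr 1
    conv_rhs => rw [← Nat.div_add_mod e p]
    rw [pow_add, pow_mul, hζp, one_pow, one_mul]
  -- key coefficient of g
  have hdmem : d ∈ f.support := f.natDegree_mem_support_of_nonzero hf0
  have hcoeff : g.coeff (d % p) = f.coeff d := by
    rw [hg, finset_sum_coeff]
    rw [Finset.sum_eq_single d]
    · simp [coeff_X_pow]
    · intro e he hne
      have hle : e ≤ d := le_natDegree_of_ne_zero (mem_support_iff.mp he)
      have hmod : e % p ≠ d % p := by
        intro h
        exact hdiv e he hne ((Nat.modEq_iff_dvd' hle).mp h)
      simp [coeff_C_mul, coeff_X_pow, Ne.symm hmod]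
    · intro h; exact absurd hdmem h
  have hcd : f.coeff d ≠ 0 := mem_support_iff.mp hdmem
  have hgne : g ≠ 0 := fun h => hcd (by rw [← hcoeff, h, coeff_zero])
  -- degree bound
  have hdegg : g.natDegree ≤ p - 1 := by
    refine natDegree_sum_le_of_forall_le _ _ fun e he => ?_
    calc (C (f.coeff e) * X ^ (e % p)).natDegree ≤ (X ^ (e % p) : ℚ[X]).natDegree :=
          natDegree_C_mul_le _ _
      _ = e % p := natDegree_X_pow _
      _ ≤ p - 1 := Nat.le_sub_one_of_lt (Nat.mod_lt _ hp0)
  -- cyclotomic divides g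
  have hmin : cyclotomic p ℚ ∣ g := by
    rw [cyclotomic_eq_minpoly_rat hζ hp0]
    exact minpoly.dvd ℚ ζ (by rw [hgf, hz])
  obtain ⟨q, hq⟩ := hmin
  have hcyc0 : cyclotomic p ℚ ≠ 0 := cyclotomic_ne_zero p ℚ
  have hq0 : q ≠ 0 := fun h => hgne (by rw [hq, h, mul_zero])
  have hdegcyc : (cyclotomic p ℚ).natDegree = p - 1 := by
    rw [natDegree_cyclotomic, Nat.totient_prime hp]
  have hdq : q.natDegree = 0 := by
    have := natDegree_mul hcyc0 hq0
    rw [← hq, hdegcyc] at this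
    omega
  obtain ⟨c, hc⟩ := natDegree_eq_zero.mp hdq
  have hc0 : c ≠ 0 := by rintro rfl; simp at hc; exact hq0 hc.symm
  -- all coefficients below p are nonzero
  have hall : ∀ i ∈ Finset.range p, i ∈ g.support := by
    intro i hi
    rw [mem_support_iff, hq, ← hc, coeff_mul_C, cyclotomic_prime, finset_sum_coeff]
    simp only [coeff_X_pow]
    simp [Finset.sum_ite_eq, hi, hc0]
  -- support of g is small
  have hsub : g.support ⊆ f.support.image (· % p) := by
    intro i hi
    rw [mem_support_iff, hg, finset_sum_coeff] at hi
    obtain ⟨e, he, hne⟩ := Finset.exists_ne_zero_of_sum_ne_zero hi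
    have : e % p = i := by
      by_contra h
      simp only [coeff_C_mul, coeff_X_pow] at hne
      rw [if_neg (fun hh => h hh.symm), mul_zero] at hne
      exact hne rfl
    exact Finset.mem_image.mpr ⟨e, he, this⟩
  have : p ≤ t := by
    calc p = (Finset.range p).card := (Finset.card_range p).symm
      _ ≤ g.support.card := Finset.card_le_card hall
      _ ≤ (f.support.image (· % p)).card := Finset.card_le_card hsub
      _ ≤ f.support.card := Finset.card_image_le
      _ ≤ t := hft
  omega
end
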